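/- arXiv:1911.03152 — 7 statements merged into one kernel-verified Lean document; each statement's English description precedes it below -/
import Mathlib

section
/- Let λ < 0 and let f : ℝ → ℝ be continuous and non-decreasing. If u and v are both classical solutions of (P_f^λ) on Ω, then u(x) = v(x) for every x in the closure of Ω. -/
/-! The difference `w = u - v` satisfies `Δw = λ (f v - f u) ≥ 0` wherever `u > v`, because
`λ < 0` and `f` is non-decreasing. On the open set `{u > v} ⊆ Ω` the function `w` is therefore
subharmonic and non-positive on the boundary, so by the weak maximum principle `w ≤ 0` there: the
set is empty. The weak maximum principle comes from perturbing `w` by `ε ‖x‖²`, whose Laplacian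
`2 ε N` is positive, so that an interior maximum would contradict the second derivative test. -/

open Set MeasureTheory Filter Topology

/-- The Laplacian of `u` at `x`: the trace of the Hessian of `u`. -/
noncomputable def laplacian {N : ℕ} (u : EuclideanSpace ℝ (Fin N) → ℝ)
    (x : EuclideanSpace ℝ (Fin N)) : ℝ :=
  ∑ i : Fin N, iteratedFDeriv ℝ 2 u x ![EuclideanSpace.single i 1, EuclideanSpace.single i 1]

/-- A classical solution of the problem `(P_f^λ)` on `Ω`:
`u` is continuous on the closure of `Ω`, twice continuously differentiable on `Ω`,
satisfies `-Δ u = λ f(u)` in `Ω` and `u = 0` on `∂ Ω`. -/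
def IsClassicalSolution {N : ℕ} (Ω : Set (EuclideanSpace ℝ (Fin N))) (lam : ℝ)
    (f : ℝ → ℝ) (u : EuclideanSpace ℝ (Fin N) → ℝ) : Prop :=
  ContinuousOn u (closure Ω) ∧ ContDiffOn ℝ 2 u Ω ∧
    (∀ x ∈ Ω, -laplacian u x = lam * f (u x)) ∧
    (∀ x ∈ frontier Ω, u x = 0)

/-- Condition (1.2): `f` is continuous, non-decreasing, non-negative and `f 0 > 0`. -/
def Cond12 (f : ℝ → ℝ) : Prop :=
  Continuous f ∧ Monotone f ∧ (∀ t, 0 ≤ f t) ∧ 0 < f 0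

open InnerProductSpace
open scoped Laplacian

theorem IsLocalMax.deriv_deriv_nonpos {φ : ℝ → ℝ} {t : ℝ} (hmax : IsLocalMax φ t)
    (hφ : ContinuousAt φ t) : deriv (deriv φ) t ≤ 0 := by
  by_contra! hpos
  -- a local maximum with `φ'' > 0` is also a local minimum, so `φ` is locally constant
  have hmin : IsLocalMin φ t := isLocalMin_of_deriv_deriv_pos hpos hmax.deriv_eq_zero hφ
  have hconst : φ =ᶠ[𝓝 t] fun _ => φ t := by
    filter_upwards [hmax, hmin] with s hs₁ hs₂ using le_antisymm hs₁ hs₂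
  have hderiv : deriv φ =ᶠ[𝓝 t] fun _ => 0 := by
    filter_upwards [hconst.eventuallyEq_nhds] with s hs
    rw [hs.deriv_eq, deriv_const]
  simp [hderiv.deriv_eq] at hpos

variable {E : Type*} [NormedAddCommGroup E] [InnerProductSpace ℝ E]

theorem ContDiffAt.deriv_deriv_comp_add_smul {g : E → ℝ} {x : E} (hg : ContDiffAt ℝ 2 g x)
    (d : E) : deriv (deriv fun t : ℝ => g (x + t • d)) 0 = fderiv ℝ (fderiv ℝ g) x d d := by
  have hline : ∀ t : ℝ, HasDerivAt (fun s : ℝ => x + s • d) d t := fun t => by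
    simpa using ((hasDerivAt_id t).smul_const d).const_add x
  have hline_tendsto : Tendsto (fun t : ℝ => x + t • d) (𝓝 0) (𝓝 x) := by
    simpa using (hline 0).continuousAt.tendsto
  have hfirst :
      deriv (fun t : ℝ => g (x + t • d)) =ᶠ[𝓝 0] fun t => fderiv ℝ g (x + t • d) d := by
    filter_upwards [hline_tendsto.eventually (hg.eventually (by simp))] with t ht
    exact ((ht.differentiableAt two_ne_zero).hasFDerivAt.comp_hasDerivAt t (hline t)).deriv
  have hfderiv : HasFDerivAt (fderiv ℝ g) (fderiv ℝ (fderiv ℝ g) x) (x + (0 : ℝ) • d) := by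
    simpa using ((hg.fderiv_right (m := 1) one_add_one_eq_two.le).differentiableAt
      one_ne_zero).hasFDerivAt
  rw [hfirst.deriv_eq]
  exact ((ContinuousLinearMap.apply ℝ ℝ d).hasFDerivAt.comp_hasDerivAt 0
    (hfderiv.comp_hasDerivAt 0 (hline 0))).deriv

theorem IsLocalMax.fderiv_fderiv_apply_self_nonpos {g : E → ℝ} {x : E} (hmax : IsLocalMax g x)
    (hg : ContDiffAt ℝ 2 g x) (d : E) : fderiv ℝ (fderiv ℝ g) x d d ≤ 0 := by
  rw [← hg.deriv_deriv_comp_add_smul d]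
  have hline : Continuous fun t : ℝ => x + t • d := by fun_prop
  exact IsLocalMax.deriv_deriv_nonpos (IsLocalMax.comp_continuous (by simpa using hmax)
    hline.continuousAt) (hg.continuousAt.comp_of_eq hline.continuousAt (by simp))

variable [FiniteDimensional ℝ E]

theorem IsLocalMax.laplacian_nonpos {g : E → ℝ} {x : E} (hmax : IsLocalMax g x)
    (hg : ContDiffAt ℝ 2 g x) : Δ g x ≤ 0 := by
  rw [laplacian_eq_iteratedFDeriv_stdOrthonormalBasis]
  exact Finset.sum_nonpos fun i _ => by
    simpa [iteratedFDeriv_two_apply] using hmax.fderiv_fderiv_apply_self_nonpos hg _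

theorem laplacian_norm_sq (x : E) : Δ (fun y : E => ‖y‖ ^ 2) x = 2 * Module.finrank ℝ E := by
  have : fderiv ℝ (fderiv ℝ fun y : E => ‖y‖ ^ 2) x = 2 • innerSL ℝ := by
    rw [fderiv_norm_sq]
    exact ((innerSL ℝ).hasFDerivAt.const_smul 2).fderiv
  rw [laplacian_eq_iteratedFDeriv_stdOrthonormalBasis]
  have hi : ∀ i, (2 • innerSL ℝ (E := E)) (stdOrthonormalBasis ℝ E i)
      (stdOrthonormalBasis ℝ E i) = 2 := fun i => by
    simp [innerSL_apply_apply]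
  simp only [iteratedFDeriv_two_apply, this, Matrix.cons_val_zero, Matrix.cons_val_one, hi]
  simp [mul_comm]

theorem exists_mem_frontier_isMaxOn_of_laplacian_pos {U : Set E} (hUo : IsOpen U)
    (hUb : Bornology.IsBounded U) (hUne : U.Nonempty) {h : E → ℝ}
    (hc : ContinuousOn h (closure U)) (hC2 : ContDiffOn ℝ 2 h U) (hΔ : ∀ x ∈ U, 0 < Δ h x) :
    ∃ x₀ ∈ frontier U, IsMaxOn h (closure U) x₀ := by
  obtain ⟨x₀, hx₀, hmax⟩ := hUb.isCompact_closure.exists_isMaxOn hUne.closure hc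
  refine ⟨x₀, ?_, hmax⟩
  rw [hUo.frontier_eq]
  refine ⟨hx₀, fun hx₀U => ?_⟩
  have hloc : IsLocalMax h x₀ :=
    hmax.isLocalMax (mem_of_superset (hUo.mem_nhds hx₀U) subset_closure)
  exact (hΔ x₀ hx₀U).not_ge (hloc.laplacian_nonpos (hC2.contDiffAt (hUo.mem_nhds hx₀U)))

theorem le_of_laplacian_nonneg (hE : 0 < Module.finrank ℝ E) {U : Set E} (hUo : IsOpen U)
    (hUb : Bornology.IsBounded U) {w : E → ℝ} (hc : ContinuousOn w (closure U))
    (hC2 : ContDiffOn ℝ 2 w U) (hΔ : ∀ x ∈ U, 0 ≤ Δ w x) {c : ℝ}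
    (hfrontier : ∀ x ∈ frontier U, w x ≤ c) : ∀ x ∈ U, w x ≤ c := by
  intro x hx
  obtain ⟨R, hR⟩ := hUb.closure.subset_closedBall 0
  have hperturbed : ∀ ε > 0, w x ≤ c + ε * (R ^ 2 + 1) := by
    intro ε hε
    have hq : ContDiff ℝ 2 (ε • fun y : E => ‖y‖ ^ 2) := (contDiff_norm_sq ℝ).const_smul ε
    have hΔh : ∀ y ∈ U, 0 < Δ (w + ε • fun y : E => ‖y‖ ^ 2) y := by
      intro y hy
      rw [(hC2.contDiffAt (hUo.mem_nhds hy)).laplacian_add hq.contDiffAt,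
        laplacian_smul ε (contDiff_norm_sq ℝ).contDiffAt, laplacian_norm_sq, smul_eq_mul]
      have := hΔ y hy
      positivity
    obtain ⟨x₀, hx₀, hmax⟩ := exists_mem_frontier_isMaxOn_of_laplacian_pos hUo hUb ⟨x, hx⟩
      (hc.add hq.continuous.continuousOn) (hC2.add hq.contDiffOn) hΔh
    have hx₀R : ‖x₀‖ ≤ R := by simpa using hR (frontier_subset_closure hx₀)
    have hmax_x := hmax (subset_closure hx)
    simp only [Set.mem_ofPred_eq, Pi.add_apply, Pi.smul_apply, smul_eq_mul] at hmax_x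
    have hx₀sq : ‖x₀‖ ^ 2 ≤ R ^ 2 + 1 := by nlinarith [norm_nonneg x₀]
    nlinarith [hfrontier x₀ hx₀, mul_le_mul_of_nonneg_left hx₀sq hε.le]
  refine le_of_forall_pos_le_add fun δ hδ => ?_
  have := hperturbed (δ / (R ^ 2 + 1)) (by positivity)
  rwa [div_mul_cancel₀ _ (by positivity)] at this

theorem laplacian_eq_innerProductSpace_laplacian {N : ℕ} (u : EuclideanSpace ℝ (Fin N) → ℝ) :
    laplacian u = Δ u := by
  funext x
  simp [laplacian,
    laplacian_eq_iteratedFDeriv_orthonormalBasis u (EuclideanSpace.basisFun (Fin N) ℝ)]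

namespace IsClassicalSolution

variable {N : ℕ} {Ω : Set (EuclideanSpace ℝ (Fin N))} {lam : ℝ} {f : ℝ → ℝ}
  {u v : EuclideanSpace ℝ (Fin N) → ℝ}

theorem laplacian_eq (hu : IsClassicalSolution Ω lam f u) {x : EuclideanSpace ℝ (Fin N)}
    (hx : x ∈ Ω) : Δ u x = -(lam * f (u x)) := by
  rw [← laplacian_eq_innerProductSpace_laplacian, ← hu.2.2.1 x hx, neg_neg]

theorem eq_zero_of_mem_closure_of_not_mem (hΩo : IsOpen Ω) (hu : IsClassicalSolution Ω lam f u)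
    {x : EuclideanSpace ℝ (Fin N)} (hx : x ∈ closure Ω) (hxΩ : x ∉ Ω) : u x = 0 :=
  hu.2.2.2 x (hΩo.frontier_eq ▸ ⟨hx, hxΩ⟩)

theorem le_of_nonpos_of_monotone (hN : 0 < N) (hΩo : IsOpen Ω) (hΩb : Bornology.IsBounded Ω)
    (hlam : lam ≤ 0) (hfm : Monotone f) (hu : IsClassicalSolution Ω lam f u)
    (hv : IsClassicalSolution Ω lam f v) : ∀ x ∈ Ω, u x ≤ v x := by
  intro x hx
  by_contra! hlt
  set U := Ω ∩ (u - v) ⁻¹' Ioi 0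
  have hUo : IsOpen U :=
    ((hu.1.sub hv.1).mono subset_closure).isOpen_inter_preimage hΩo isOpen_Ioi
  have hΔ : ∀ y ∈ U, 0 ≤ Δ (u - v) y := by
    rintro y ⟨hyΩ, hy⟩
    have hvu : v y ≤ u y := by simpa using (show 0 < u y - v y from hy).le
    rw [(hu.2.1.contDiffAt (hΩo.mem_nhds hyΩ)).laplacian_sub
      (hv.2.1.contDiffAt (hΩo.mem_nhds hyΩ)), hu.laplacian_eq hyΩ, hv.laplacian_eq hyΩ]
    nlinarith [hfm hvu]
  have hfrontier : ∀ y ∈ frontier U, (u - v) y ≤ 0 := by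
    intro y hy
    rw [hUo.frontier_eq] at hy
    by_cases hyΩ : y ∈ Ω
    · exact not_lt.1 fun hpos => hy.2 ⟨hyΩ, hpos⟩
    · have hyΩ' := closure_mono inter_subset_left hy.1
      simp [hu.eq_zero_of_mem_closure_of_not_mem hΩo hyΩ' hyΩ,
        hv.eq_zero_of_mem_closure_of_not_mem hΩo hyΩ' hyΩ]
  have := le_of_laplacian_nonneg (by simpa using hN) hUo (hΩb.subset inter_subset_left)
    ((hu.1.sub hv.1).mono (closure_mono inter_subset_left))
    ((hu.2.1.sub hv.2.1).mono inter_subset_left) hΔ hfrontier x ⟨hx, by simpa using hlt⟩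
  simp only [Pi.sub_apply, sub_nonpos] at this
  exact this.not_gt hlt

end IsClassicalSolution

theorem stmt_0_general {N : ℕ} (hN : 2 ≤ N) (Ω : Set (EuclideanSpace ℝ (Fin N)))
    (hΩo : IsOpen Ω) (hΩb : Bornology.IsBounded Ω)
    (lam : ℝ) (hlam : lam < 0) (f : ℝ → ℝ) (hfm : Monotone f)
    (u v : EuclideanSpace ℝ (Fin N) → ℝ)
    (hu : IsClassicalSolution Ω lam f u) (hv : IsClassicalSolution Ω lam f v) :
    ∀ x ∈ closure Ω, u x = v x := by
  intro x hx
  by_cases hxΩ : x ∈ Ω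
  · exact le_antisymm (hu.le_of_nonpos_of_monotone (by omega) hΩo hΩb hlam.le hfm hv x hxΩ)
      (hv.le_of_nonpos_of_monotone (by omega) hΩo hΩb hlam.le hfm hu x hxΩ)
  · rw [hu.eq_zero_of_mem_closure_of_not_mem hΩo hx hxΩ,
      hv.eq_zero_of_mem_closure_of_not_mem hΩo hx hxΩ]

/-- Uniqueness: for `λ < 0` and `f` continuous and non-decreasing, any two classical
solutions of `(P_f^λ)` on `Ω` coincide on the closure of `Ω`. -/
theorem stmt_0 {N : ℕ} (hN : 2 ≤ N) (Ω : Set (EuclideanSpace ℝ (Fin N)))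
    (hΩo : IsOpen Ω) (hΩb : Bornology.IsBounded Ω) (hΩne : Ω.Nonempty)
    (lam : ℝ) (hlam : lam < 0) (f : ℝ → ℝ) (hfc : Continuous f) (hfm : Monotone f)
    (u v : EuclideanSpace ℝ (Fin N) → ℝ)
    (hu : IsClassicalSolution Ω lam f u) (hv : IsClassicalSolution Ω lam f v) :
    ∀ x ∈ closure Ω, u x = v x :=
  stmt_0_general hN Ω hΩo hΩb lam hlam f hfm u v hu hv
end

section
/- Let f satisfy condition (1.2) and assume additionally f(t) > 0 for every t ∈ ℝ. Suppose that for each λ < 0, u_λ is a classical solution of (P_f^λ) on Ω. Then u_λ → −∞ uniformly on compact subsets of Ω as λ → −∞: for every compact set K ⊂ Ω and every M > 0 there exists λ̄ < 0 such that u_λ(x) ≤ −M for all x ∈ K and all λ < λ̄. -/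
/-!
Fix `K`, `M` and `δ > 0` with the `δ`-neighbourhood of `K` inside `Ω`, and put `c = M / δ²`.
If `u(x₀) > -M` for some `x₀ ∈ K`, maximise `u - c‖x - x₀‖²` over the closure of
`{x ∈ Ω | u x > -M}`. An interior maximum forces `Δu ≤ 2Nc`, whereas there
`Δu = -λ f(u) ≥ -λ f(-M) > 2Nc` once `λ` is negative enough. On `{u = -M}` the function is
at most `-M`, and on `∂Ω` it is at most `-cδ² = -M`; either way `u(x₀) ≤ -M`.
-/

open Set MeasureTheory Filter Topology

theorem IsLocalMax.hasDerivAt_deriv_nonpos {f f' : ℝ → ℝ} {a D : ℝ}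
    (hf : ∀ᶠ t in 𝓝 a, HasDerivAt f (f' t) t) (hf' : HasDerivAt f' D a)
    (hmax : IsLocalMax f a) : D ≤ 0 := by
  -- If `D > 0`, the second derivative test makes `a` a local minimum as well, so `f` is
  -- locally constant and `D = 0`.
  have hderiv_eq : deriv f =ᶠ[𝓝 a] f' := hf.mono fun _ ht => ht.deriv
  have hderiv : deriv (deriv f) a = D := hderiv_eq.deriv_eq.trans hf'.deriv
  by_contra! hD
  have hmin : IsLocalMin f a := isLocalMin_of_deriv_deriv_pos (hderiv ▸ hD)
    hmax.deriv_eq_zero hf.self_of_nhds.continuousAt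
  have hconst : deriv f =ᶠ[𝓝 a] fun _ => 0 := by
    have : f =ᶠ[𝓝 a] fun _ => f a := (hmax.and hmin).mono fun _ h => le_antisymm h.1 h.2
    exact this.eventuallyEq_nhds.mono fun _ h => h.deriv_eq.trans (deriv_const _ _)
  rw [hconst.deriv_eq, deriv_const] at hderiv
  exact hD.ne hderiv

section Line

variable {E : Type*} [NormedAddCommGroup E] [NormedSpace ℝ E] {h : E → ℝ} {z : E}

theorem hasDerivAt_add_smul (z e : E) (t : ℝ) : HasDerivAt (fun s : ℝ => z + s • e) e t :=
  ((hasDerivAt_id t).smul_const e).const_add z |>.congr_deriv (one_smul ℝ e)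

theorem ContDiffAt.eventually_hasDerivAt_comp_line (hh : ContDiffAt ℝ 2 h z) (e : E) :
    ∀ᶠ t in 𝓝 (0 : ℝ), HasDerivAt (fun s => h (z + s • e)) (fderiv ℝ h (z + t • e) e) t := by
  have hline : Tendsto (fun t : ℝ => z + t • e) (𝓝 0) (𝓝 z) := by
    simpa using (hasDerivAt_add_smul z e 0).continuousAt.tendsto
  filter_upwards [hline.eventually (hh.eventually (by simp))] with t ht
  exact (ht.differentiableAt (by simp)).hasFDerivAt.comp_hasDerivAt t (hasDerivAt_add_smul z e t)

theorem ContDiffAt.hasDerivAt_fderiv_comp_line (hh : ContDiffAt ℝ 2 h z) (e : E) :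
    HasDerivAt (fun t : ℝ => fderiv ℝ h (z + t • e) e) (fderiv ℝ (fderiv ℝ h) z e e) 0 := by
  have hF : DifferentiableAt ℝ (fderiv ℝ h) z :=
    (hh.fderiv_right (m := 1) (by norm_num)).differentiableAt one_ne_zero
  exact ((ContinuousLinearMap.apply ℝ ℝ e).hasFDerivAt.comp z hF.hasFDerivAt).comp_hasDerivAt_of_eq
    0 (hasDerivAt_add_smul z e 0) (by simp)

end Line

open scoped RealInnerProductSpace in
theorem IsLocalMax.fderiv_fderiv_apply_le {E : Type*} [NormedAddCommGroup E]
    [InnerProductSpace ℝ E] {h : E → ℝ} {z x₀ : E} {c : ℝ} (hh : ContDiffAt ℝ 2 h z)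
    (hmax : IsLocalMax (fun w => h w - c * ‖w - x₀‖ ^ 2) z) (e : E) :
    fderiv ℝ (fderiv ℝ h) z e e ≤ 2 * c * ‖e‖ ^ 2 := by
  have hshift (t : ℝ) : HasDerivAt (fun s : ℝ => z + s • e - x₀) e t :=
    (hasDerivAt_add_smul z e t).sub_const x₀
  have hmax_line : IsLocalMax (fun t : ℝ => h (z + t • e) - c * ‖z + t • e - x₀‖ ^ 2) 0 :=
    IsLocalMax.comp_continuous (f := fun w => h w - c * ‖w - x₀‖ ^ 2)
      (g := fun t : ℝ => z + t • e) (by simpa using hmax)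
      (hasDerivAt_add_smul z e 0).continuousAt
  have hderiv : ∀ᶠ t in 𝓝 (0 : ℝ), HasDerivAt
      (fun s : ℝ => h (z + s • e) - c * ‖z + s • e - x₀‖ ^ 2)
      (fderiv ℝ h (z + t • e) e - c * (2 * ⟪z + t • e - x₀, e⟫)) t :=
    (hh.eventually_hasDerivAt_comp_line e).mono fun t ht =>
      ht.sub (((hshift t).norm_sq).const_mul c)
  have hderiv2 : HasDerivAt (fun t : ℝ => fderiv ℝ h (z + t • e) e - c * (2 * ⟪z + t • e - x₀, e⟫))
      (fderiv ℝ (fderiv ℝ h) z e e - c * (2 * (⟪z + (0 : ℝ) • e - x₀, 0⟫ + ⟪e, e⟫))) 0 :=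
    (hh.hasDerivAt_fderiv_comp_line e).sub
      ((((hshift 0).inner ℝ (hasDerivAt_const 0 e)).const_mul 2).const_mul c)
  have := hmax_line.hasDerivAt_deriv_nonpos hderiv hderiv2
  rw [inner_zero_right, zero_add, real_inner_self_eq_norm_sq] at this
  linarith

theorem laplacian_le_of_isLocalMax {N : ℕ} {u : EuclideanSpace ℝ (Fin N) → ℝ}
    {z x₀ : EuclideanSpace ℝ (Fin N)} {c : ℝ} (hu : ContDiffAt ℝ 2 u z)
    (hmax : IsLocalMax (fun w => u w - c * ‖w - x₀‖ ^ 2) z) :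
    laplacian u z ≤ 2 * N * c := by
  calc laplacian u z
      = ∑ i : Fin N, fderiv ℝ (fderiv ℝ u) z (EuclideanSpace.single i 1)
          (EuclideanSpace.single i 1) := by
        simp [laplacian, iteratedFDeriv_two_apply]
    _ ≤ ∑ _i : Fin N, 2 * c := Finset.sum_le_sum fun i _ => by
        simpa using hmax.fderiv_fderiv_apply_le hu (EuclideanSpace.single i 1)
    _ = 2 * N * c := by simp; ring

theorem le_max_of_two_mul_lt_laplacian {N : ℕ} {Ω : Set (EuclideanSpace ℝ (Fin N))}
    (hΩo : IsOpen Ω) (hΩb : Bornology.IsBounded Ω) {u : EuclideanSpace ℝ (Fin N) → ℝ}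
    (hcont : ContinuousOn u (closure Ω)) (hC2 : ContDiffOn ℝ 2 u Ω)
    (hbd : ∀ x ∈ frontier Ω, u x ≤ 0) {m c : ℝ} (hc : 0 ≤ c)
    (hlap : ∀ z ∈ Ω, m < u z → 2 * N * c < laplacian u z)
    {x₀ : EuclideanSpace ℝ (Fin N)} {δ : ℝ} (hδ : 0 < δ) (hball : Metric.ball x₀ δ ⊆ Ω) :
    u x₀ ≤ max m (-(c * δ ^ 2)) := by
  by_cases hx₀m : u x₀ ≤ m
  · exact le_max_of_le_left hx₀m
  set g := fun w => u w - c * ‖w - x₀‖ ^ 2 with hg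
  set V := Ω ∩ u ⁻¹' Ioi m
  have hx₀V : x₀ ∈ V := ⟨hball (Metric.mem_ball_self hδ), not_le.mp hx₀m⟩
  have hVΩ : V ⊆ Ω := inter_subset_left
  have hgcont : ContinuousOn g (closure V) :=
    (hcont.mono (closure_mono hVΩ)).sub (Continuous.continuousOn (by fun_prop))
  obtain ⟨z, hzV, hzmax⟩ := (hΩb.subset hVΩ).isCompact_closure.exists_isMaxOn
    ⟨x₀, subset_closure hx₀V⟩ hgcont
  have hgz : u x₀ ≤ g z := by simpa [hg] using hzmax (subset_closure hx₀V)
  have hgz_le : g z ≤ u z := sub_le_self _ (by positivity)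
  by_cases hzΩ : z ∈ Ω
  · by_cases hzm : m < u z
    · have hopen : IsOpen V := hC2.continuousOn.isOpen_inter_preimage hΩo isOpen_Ioi
      have hloc : IsLocalMax g z := hzmax.isLocalMax
        (mem_of_superset (hopen.mem_nhds ⟨hzΩ, hzm⟩) subset_closure)
      have := laplacian_le_of_isLocalMax (hC2.contDiffAt (hΩo.mem_nhds hzΩ)) hloc
      linarith [hlap z hzΩ hzm]
    · exact le_max_of_le_left (by linarith)
  · have hzfr : z ∈ frontier Ω := ⟨closure_mono hVΩ hzV, by rwa [hΩo.interior_eq]⟩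
    have hδz : δ ≤ ‖z - x₀‖ := by
      by_contra! h
      exact hzΩ (hball (by rwa [Metric.mem_ball, dist_eq_norm]))
    have : c * δ ^ 2 ≤ c * ‖z - x₀‖ ^ 2 := by gcongr
    exact le_max_of_le_right (by simp only [hg] at hgz; linarith [hbd z hzfr])

theorem stmt_5_general {N : ℕ} (Ω : Set (EuclideanSpace ℝ (Fin N)))
    (hΩo : IsOpen Ω) (hΩb : Bornology.IsBounded Ω)
    (f : ℝ → ℝ) (hf : Cond12 f) (hfpos : ∀ t, 0 < f t)
    (u : ℝ → EuclideanSpace ℝ (Fin N) → ℝ)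
    (hu : ∀ lam < (0:ℝ), IsClassicalSolution Ω lam f (u lam)) :
    ∀ K ⊆ Ω, IsCompact K → ∀ M > (0:ℝ), ∃ lb < (0:ℝ), ∀ lam < lb, ∀ x ∈ K,
      u lam x ≤ -M := by
  intro K hKΩ hK M hM
  obtain ⟨δ, hδ, hthick⟩ := hK.exists_thickening_subset_open hΩo hKΩ
  have hc₀ : 0 < f (-M) := hfpos (-M)
  have hlb : 0 < (2 * N + 1) * M / (f (-M) * δ ^ 2) := by positivity
  refine ⟨-((2 * N + 1) * M / (f (-M) * δ ^ 2)), neg_neg_of_pos hlb, fun lam hlam x₀ hx₀ => ?_⟩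
  have hlam0 : 0 < -lam := by linarith
  obtain ⟨hcont, hC2, hpde, hbd⟩ := hu lam (by linarith)
  rw [lt_neg, div_lt_iff₀ (by positivity)] at hlam
  have hlap (z) (hz : z ∈ Ω) (hMz : -M < u lam z) :
      2 * N * (M / δ ^ 2) < laplacian (u lam) z := by
    have hfz := mul_le_mul_of_nonneg_left (hf.2.1 hMz.le) hlam0.le
    rw [← neg_neg (laplacian _ _), hpde z hz]
    calc 2 * N * (M / δ ^ 2) < (2 * N + 1) * M / δ ^ 2 := by
          rw [mul_div_assoc]; gcongr; linarith
      _ ≤ -(lam * f (u lam z)) := by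
          rw [div_le_iff₀ (by positivity)]; nlinarith [sq_nonneg δ]
  calc u lam x₀ ≤ max (-M) (-(M / δ ^ 2 * δ ^ 2)) :=
        le_max_of_two_mul_lt_laplacian hΩo hΩb hcont hC2 (fun x hx => (hbd x hx).le)
          (by positivity) hlap hδ ((Metric.ball_subset_thickening hx₀ δ).trans hthick)
    _ = -M := by field_simp; simp

/-- Theorem 1.1 (case `t₀ = -∞`): if `f > 0` everywhere then the solutions `u_λ` tend to
`-∞` uniformly on compact subsets of `Ω` as `λ → -∞`. -/
theorem stmt_5 {N : ℕ} (hN : 2 ≤ N) (Ω : Set (EuclideanSpace ℝ (Fin N)))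
    (hΩo : IsOpen Ω) (hΩb : Bornology.IsBounded Ω) (hΩne : Ω.Nonempty)
    (f : ℝ → ℝ) (hf : Cond12 f) (hfpos : ∀ t, 0 < f t)
    (u : ℝ → EuclideanSpace ℝ (Fin N) → ℝ)
    (hu : ∀ lam < (0:ℝ), IsClassicalSolution Ω lam f (u lam)) :
    ∀ K ⊆ Ω, IsCompact K → ∀ M > (0:ℝ), ∃ lb < (0:ℝ), ∀ lam < lb, ∀ x ∈ K,
      u lam x ≤ -M :=
  stmt_5_general Ω hΩo hΩb f hf hfpos u hu
end

section
/- Let N ≥ 2, let B₁ be the open unit ball of ℝ^N, let t₀ < 0, 0 ≤ p ≤ 1 and λ < 0. Let v : [0, ∞) → (0, ∞) be twice continuously differentiable with v(0) = 1, v′(0) = 0 and v″(r) + ((N−1)/r) v′(r) = v(r)^p for every r > 0. Suppose α > 0 and ε := √(α^{1−p}/(−λ)) satisfy α · v(1/ε) = −t₀. Then the function u(x) := t₀ + α v(|x|/ε) is continuous on the closed unit ball, twice continuously differentiable on B₁, satisfies −Δu(x) = λ ((u(x) − t₀)⁺)^p for every x ∈ B₁, and u(x) = 0 for every x with |x| =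 1. -/
/-!
Write `g s = v (√s)`, so that `u x = t₀ + α g (‖x‖² / ε²)`. For any `G` with one-sided derivatives
on `[0, ∞)`, `Δ (G ∘ ‖·‖²) = 2N G'(‖x‖²) + 4‖x‖² G''(‖x‖²)`. With `Z r = v'(r) / r` (`derivDivId`),
the chain rule gives `g' s = Z(√s) / 2` and `g'' s = K(√s) / 4` with `K r = Z'(r) / r`
(`derivDivId₂`), while the radial equation gives `Z' = (v ^ p - N Z) / r`; hence
`2N g' + 4 s g'' = N Z + r² K = v ^ p` at `r = √s`, and the choice of `ε` turns this into
`-Δu = λ (α v) ^ p`. The only delicate point is the origin: `Z` and `K` have the finite limits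
`1/N` and `p / (N (N + 2))` as `r → 0⁺` (L'Hôpital's rule applied to the divergence form
`(r^(N-1) v')' = r^(N-1) v ^ p`), which makes `g` of class C² up to `s = 0` and `u` of class C²
across the origin.
-/

open Set MeasureTheory Filter Topology

theorem hasDerivWithinAt_Ici_of_hasDerivAt_Ioi {E : Type*} [NormedAddCommGroup E]
    [NormedSpace ℝ E] {f f' : ℝ → E} {a x : ℝ} (hf : ContinuousOn f (Ici a))
    (hd : ∀ y > a, HasDerivAt f (f' y) y) (hf' : ContinuousOn f' (Ici a)) (hx : a ≤ x) :
    HasDerivWithinAt f (f' x) (Ici a) x := by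
  rcases hx.eq_or_lt with rfl | hx
  · refine hasDerivWithinAt_Ici_of_tendsto_deriv
      (fun y hy => (hd y hy).differentiableAt.differentiableWithinAt)
      ((hf a (mem_Ici.2 le_rfl)).mono Ioi_subset_Ici_self) self_mem_nhdsWithin ?_
    refine ((hf' a (mem_Ici.2 le_rfl)).tendsto.mono_left
      (nhdsWithin_mono _ Ioi_subset_Ici_self)).congr' ?_
    filter_upwards [self_mem_nhdsWithin] with y hy using (hd y hy).deriv.symm
  · exact (hd x hx).hasDerivWithinAt

theorem contDiffOn_two_of_hasDerivWithinAt {f f' f'' : ℝ → ℝ} {s : Set ℝ} (hs : UniqueDiffOn ℝ s)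
    (hf : ∀ x ∈ s, HasDerivWithinAt f (f' x) s x) (hf' : ∀ x ∈ s, HasDerivWithinAt f' (f'' x) s x)
    (hf'' : ContinuousOn f'' s) : ContDiffOn ℝ 2 f s := by
  have hf'C1 : ContDiffOn ℝ 1 f' s :=
    (contDiffOn_one_iff_derivWithin hs).2 ⟨fun x hx => (hf' x hx).differentiableWithinAt,
      hf''.congr fun x hx => (hf' x hx).derivWithin (hs x hx)⟩
  rw [show (2 : WithTop ℕ∞) = 1 + 1 from rfl, contDiffOn_succ_iff_derivWithin hs]
  exact ⟨fun x hx => (hf x hx).differentiableWithinAt, by simp,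
    hf'C1.congr fun x hx => (hf x hx).derivWithin (hs x hx)⟩

theorem continuousOn_Ici_update {f : ℝ → ℝ} {a b : ℝ} (hf : ContinuousOn f (Ioi a))
    (hlim : Tendsto f (𝓝[>] a) (𝓝 b)) : ContinuousOn (Function.update f a b) (Ici a) := by
  intro x hx
  rcases (mem_Ici.1 hx).eq_or_lt with rfl | hx
  · rwa [continuousWithinAt_update_same, Ici_sdiff_left]
  · refine ((hf.continuousAt (Ioi_mem_nhds hx)).congr ?_).continuousWithinAt
    filter_upwards [Ioi_mem_nhds hx] with y hy using (Function.update_of_ne hy.ne' _ _).symm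

theorem hasDerivWithinAt_comp_sqrt {f k : ℝ → ℝ} (hf : ContinuousOn f (Ici 0))
    (hd : ∀ r > 0, HasDerivAt f (r * k r) r) (hk : ContinuousOn k (Ici 0)) {s : ℝ} (hs : 0 ≤ s) :
    HasDerivWithinAt (fun t => f √t) (k √s / 2) (Ici 0) s := by
  have hsqrt : ContinuousOn Real.sqrt (Ici 0) := Real.continuous_sqrt.continuousOn
  have hmaps : MapsTo Real.sqrt (Ici 0) (Ici 0) := fun t _ => Real.sqrt_nonneg t
  refine hasDerivWithinAt_Ici_of_hasDerivAt_Ioi (hf.comp hsqrt hmaps) (fun t ht => ?_)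
    ((hk.comp hsqrt hmaps).div_const 2) hs
  have hr : 0 < √t := Real.sqrt_pos.2 ht
  refine ((hd _ hr).comp t (Real.hasDerivAt_sqrt ht.ne')).congr_deriv ?_
  simp only [Function.comp_apply]
  field_simp

theorem hasDerivWithinAt_Ici_comp_div_const {f f' : ℝ → ℝ} {c s : ℝ} (hc : 0 < c)
    (hf : HasDerivWithinAt f (f' (s / c)) (Ici 0) (s / c)) :
    HasDerivWithinAt (fun t => f (t / c)) (f' (s / c) / c) (Ici 0) s :=
  (hf.comp s ((hasDerivAt_id s).div_const c).hasDerivWithinAt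
    (fun t ht => div_nonneg ht hc.le)).congr_deriv (by ring)

theorem laplacian_comp_norm_sq {N : ℕ} {G G' G'' : ℝ → ℝ}
    (hG : ∀ s ≥ 0, HasDerivWithinAt G (G' s) (Ici 0) s)
    (hG' : ∀ s ≥ 0, HasDerivWithinAt G' (G'' s) (Ici 0) s) (x : EuclideanSpace ℝ (Fin N)) :
    laplacian (fun y => G (‖y‖ ^ 2)) x = 2 * N * G' (‖x‖ ^ 2) + 4 * ‖x‖ ^ 2 * G'' (‖x‖ ^ 2) := by
  have hcomp {F F' : ℝ → ℝ} (hF : ∀ s ≥ 0, HasDerivWithinAt F (F' s) (Ici 0) s)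
      (y : EuclideanSpace ℝ (Fin N)) :
      HasFDerivAt (fun y => F (‖y‖ ^ 2)) (F' (‖y‖ ^ 2) • (2 • innerSL ℝ) y) y :=
    (hF _ (sq_nonneg _)).comp_hasFDerivAt y (hasStrictFDerivAt_norm_sq y).hasFDerivAt
      (.of_forall fun _ => sq_nonneg _)
  have hfd : fderiv ℝ (fun y => G (‖y‖ ^ 2)) = fun y => G' (‖y‖ ^ 2) • (2 • innerSL ℝ) y :=
    funext fun y => (hcomp hG y).fderiv
  have hfd2 : HasFDerivAt (fun y => G' (‖y‖ ^ 2) • (2 • innerSL ℝ) y) _ x :=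
    (hcomp hG' x).smul (2 • innerSL ℝ).hasFDerivAt
  have hdiag (i : Fin N) :
      iteratedFDeriv ℝ 2 (fun y => G (‖y‖ ^ 2)) x
        ![EuclideanSpace.single i 1, EuclideanSpace.single i 1]
        = 2 * G' (‖x‖ ^ 2) + 4 * x i ^ 2 * G'' (‖x‖ ^ 2) := by
    have hone : innerSL ℝ (EuclideanSpace.single i (1:ℝ)) (EuclideanSpace.single i 1) = 1 := by
      simp
    rw [iteratedFDeriv_two_apply, hfd, hfd2.fderiv]
    simp [hone, EuclideanSpace.inner_single_right]
    ring
  simp only [laplacian, hdiag, Finset.sum_add_distrib, ← Finset.sum_mul, ← Finset.mul_sum,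
    ← EuclideanSpace.real_norm_sq_eq]
  simp only [Finset.sum_const, Finset.card_univ, Fintype.card_fin, nsmul_eq_mul]
  ring

structure RadialProfile (N : ℕ) (p : ℝ) (v : ℝ → ℝ) : Prop where
  contDiffOn : ContDiffOn ℝ 2 v (Ici 0)
  pos : ∀ r ≥ (0:ℝ), 0 < v r
  map_zero : v 0 = 1
  derivWithin_zero : derivWithin v (Ici 0) 0 = 0
  ode : ∀ r > (0:ℝ), deriv (deriv v) r + (((N:ℝ) - 1) / r) * deriv v r = v r ^ p

namespace RadialProfile

variable {N : ℕ} {p : ℝ} {v : ℝ → ℝ} {r s c : ℝ}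

theorem hasDerivAt (hv : RadialProfile N p v) (hr : 0 < r) : HasDerivAt v (deriv v r) r :=
  ((hv.contDiffOn.differentiableOn (by norm_num)) r hr.le).differentiableAt
    (Ici_mem_nhds hr) |>.hasDerivAt

theorem hasDerivAt_deriv (hv : RadialProfile N p v) (hr : 0 < r) :
    HasDerivAt (deriv v) (deriv (deriv v) r) r :=
  (((hv.contDiffOn.mono Ioi_subset_Ici_self).deriv_of_isOpen isOpen_Ioi (m := 1)
    (by norm_num)).differentiableOn one_ne_zero r hr).differentiableAt
    (Ioi_mem_nhds hr) |>.hasDerivAt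

theorem continuousOn_deriv (hv : RadialProfile N p v) : ContinuousOn (deriv v) (Ioi 0) :=
  fun _ hr => (hv.hasDerivAt_deriv hr).continuousAt.continuousWithinAt

theorem tendsto_deriv (hv : RadialProfile N p v) : Tendsto (deriv v) (𝓝[>] 0) (𝓝 0) := by
  have h := hv.contDiffOn.continuousOn_derivWithin (uniqueDiffOn_Ici 0) (by norm_num) 0
    (mem_Ici.2 le_rfl)
  rw [ContinuousWithinAt, hv.derivWithin_zero] at h
  refine (h.mono_left (nhdsWithin_mono _ Ioi_subset_Ici_self)).congr' ?_
  filter_upwards [self_mem_nhdsWithin] with r hr using derivWithin_of_mem_nhds (Ici_mem_nhds hr)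

theorem tendsto_rpow (hv : RadialProfile N p v) (q : ℝ) :
    Tendsto (fun r => v r ^ q) (𝓝[>] 0) (𝓝 1) := by
  have h := hv.contDiffOn.continuousOn 0 (mem_Ici.2 le_rfl)
  rw [ContinuousWithinAt, hv.map_zero] at h
  simpa [Function.comp_def] using
    (Real.continuousAt_rpow_const 1 q (Or.inl one_ne_zero)).tendsto.comp
      (h.mono_left (nhdsWithin_mono _ Ioi_subset_Ici_self))

theorem hasDerivAt_pow_mul_deriv (hv : RadialProfile N p v) (hN : 0 < N) (hr : 0 < r) :
    HasDerivAt (fun r => r ^ (N - 1) * deriv v r) (r ^ (N - 1) * v r ^ p) r := by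
  refine ((hasDerivAt_pow (N - 1) r).mul (hv.hasDerivAt_deriv hr)).congr_deriv ?_
  rw [← hv.ode r hr]
  obtain ⟨M, rfl⟩ := Nat.exists_eq_add_of_le' hN
  cases M with
  | zero => simp
  | succ M => simp [pow_succ]; field_simp; ring

theorem tendsto_pow_mul_deriv (hv : RadialProfile N p v) :
    Tendsto (fun r => r ^ (N - 1) * deriv v r) (𝓝[>] 0) (𝓝 0) := by
  simpa using (((continuous_pow (N - 1)).tendsto (0:ℝ)).mono_left nhdsWithin_le_nhds).mul
    hv.tendsto_deriv

theorem tendsto_deriv_div (hv : RadialProfile N p v) (hN : 0 < N) :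
    Tendsto (fun r => deriv v r / r) (𝓝[>] 0) (𝓝 (1 / N)) := by
  have hlim := HasDerivAt.lhopital_zero_nhdsGT (g := fun r => r ^ N)
    (eventually_mem_nhdsWithin.mono fun r hr => hv.hasDerivAt_pow_mul_deriv hN hr)
    (.of_forall fun r => hasDerivAt_pow N r)
    (eventually_mem_nhdsWithin.mono fun r (hr : 0 < r) => by positivity)
    hv.tendsto_pow_mul_deriv
    (by simpa [hN.ne'] using ((continuous_pow N).tendsto (0:ℝ)).mono_left nhdsWithin_le_nhds)
    (((hv.tendsto_rpow p).div_const N).congr' <| eventually_mem_nhdsWithin.mono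
      fun r (hr : 0 < r) => by field_simp)
  refine hlim.congr' (eventually_mem_nhdsWithin.mono fun r (hr : 0 < r) => ?_)
  obtain ⟨M, rfl⟩ := Nat.exists_eq_add_of_le' hN
  simp [pow_succ]
  field_simp

theorem tendsto_sub_div_sq (hv : RadialProfile N p v) (hN : 0 < N) :
    Tendsto (fun r => (v r ^ p - N * (deriv v r / r)) / r ^ 2) (𝓝[>] 0)
      (𝓝 (p / (N * (N + 2)))) := by
  have hpow (n : ℕ) (hn : n ≠ 0) : Tendsto (fun r : ℝ => r ^ n) (𝓝[>] 0) (𝓝 0) := by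
    simpa [hn] using ((continuous_pow n).tendsto (0:ℝ)).mono_left nhdsWithin_le_nhds
  have hnum : Tendsto (fun r => r ^ N * v r ^ p - N * (r ^ (N - 1) * deriv v r)) (𝓝[>] 0)
      (𝓝 0) := by
    simpa using ((hpow N hN.ne').mul (hv.tendsto_rpow p)).sub
      (hv.tendsto_pow_mul_deriv.const_mul (N : ℝ))
  have hdiv : Tendsto (fun r => p * v r ^ (p - 1) * (deriv v r / r) / (N + 2)) (𝓝[>] 0)
      (𝓝 (p / (N * (N + 2)))) := by
    convert ((tendsto_const_nhds.mul (hv.tendsto_rpow (p - 1))).mul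
      (hv.tendsto_deriv_div hN)).div_const ((N : ℝ) + 2) using 2
    field_simp
  -- The quotient is `(r^N v^p - N r^(N-1) v') / r^(N+2)`, and by the divergence form of the
  -- equation the derivative of this numerator is just `r^N (v^p)'`.
  have hlim := HasDerivAt.lhopital_zero_nhdsGT
    (f' := fun r => r ^ N * (deriv v r * p * v r ^ (p - 1)))
    (eventually_mem_nhdsWithin.mono fun r (hr : 0 < r) =>
      (((hasDerivAt_pow N r).mul ((hv.hasDerivAt hr).rpow_const (Or.inl (hv.pos r hr.le).ne'))).sub
        ((hv.hasDerivAt_pow_mul_deriv hN hr).const_mul (N : ℝ))).congr_deriv (by ring))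
    (.of_forall fun r => hasDerivAt_pow (N + 2) r)
    (eventually_mem_nhdsWithin.mono fun r (hr : 0 < r) => by positivity)
    hnum (hpow (N + 2) (by omega))
    (hdiv.congr' (eventually_mem_nhdsWithin.mono fun r (hr : 0 < r) => by
      push_cast; field_simp; ring))
  refine hlim.congr' (eventually_mem_nhdsWithin.mono fun r (hr : 0 < r) => ?_)
  obtain ⟨M, rfl⟩ := Nat.exists_eq_add_of_le' hN
  simp [pow_succ]
  field_simp

noncomputable def derivDivId (N : ℕ) (v : ℝ → ℝ) : ℝ → ℝ :=
  Function.update (fun r => deriv v r / r) 0 (1 / N)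

noncomputable def derivDivId₂ (N : ℕ) (p : ℝ) (v : ℝ → ℝ) : ℝ → ℝ :=
  Function.update (fun r => (v r ^ p - N * (deriv v r / r)) / r ^ 2) 0 (p / (N * (N + 2)))

theorem derivDivId_of_pos (hr : 0 < r) : derivDivId N v r = deriv v r / r :=
  Function.update_of_ne hr.ne' ..

theorem derivDivId₂_of_pos (hr : 0 < r) :
    derivDivId₂ N p v r = (v r ^ p - N * (deriv v r / r)) / r ^ 2 :=
  Function.update_of_ne hr.ne' ..

theorem continuousOn_derivDivId (hv : RadialProfile N p v) (hN : 0 < N) :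
    ContinuousOn (derivDivId N v) (Ici 0) :=
  continuousOn_Ici_update (hv.continuousOn_deriv.div continuousOn_id fun _ hr => hr.ne')
    (hv.tendsto_deriv_div hN)

theorem continuousOn_derivDivId₂ (hv : RadialProfile N p v) (hN : 0 < N) :
    ContinuousOn (derivDivId₂ N p v) (Ici 0) := by
  refine continuousOn_Ici_update (fun r (hr : 0 < r) => ContinuousAt.continuousWithinAt ?_)
    (hv.tendsto_sub_div_sq hN)
  have hvr := (hv.hasDerivAt hr).continuousAt.rpow_const (p := p) (Or.inl (hv.pos r hr.le).ne')
  have hdr := (hv.hasDerivAt_deriv hr).continuousAt.div continuousAt_id hr.ne'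
  exact (hvr.sub (continuousAt_const.mul hdr)).div (continuousAt_id.pow 2) (by positivity)

theorem hasDerivAt_derivDivId (hv : RadialProfile N p v) (hr : 0 < r) :
    HasDerivAt (derivDivId N v) (r * derivDivId₂ N p v r) r := by
  have hZ : (fun r => deriv v r / r) =ᶠ[𝓝 r] derivDivId N v := by
    filter_upwards [Ioi_mem_nhds hr] with t ht using (derivDivId_of_pos ht).symm
  refine (((hv.hasDerivAt_deriv hr).div (hasDerivAt_id r) hr.ne').congr_of_eventuallyEq
    hZ.symm).congr_deriv ?_
  rw [derivDivId₂_of_pos hr, ← hv.ode r hr, id]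
  field_simp
  ring

theorem derivDivId_add (hv : RadialProfile N p v) (hN : 0 < N) (hr : 0 ≤ r) :
    N * derivDivId N v r + r ^ 2 * derivDivId₂ N p v r = v r ^ p := by
  rcases hr.eq_or_lt with rfl | hr
  · simp [derivDivId, hv.map_zero, hN.ne']
  · rw [derivDivId_of_pos hr, derivDivId₂_of_pos hr]
    field_simp
    ring

theorem hasDerivWithinAt_comp_sqrt_div (hv : RadialProfile N p v) (hN : 0 < N) (hc : 0 < c)
    (hs : 0 ≤ s) :
    HasDerivWithinAt (fun t => v √(t / c)) (derivDivId N v √(s / c) / 2 / c) (Ici 0) s :=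
  hasDerivWithinAt_Ici_comp_div_const (f := fun t => v √t)
    (f' := fun t => derivDivId N v √t / 2) hc <|
    hasDerivWithinAt_comp_sqrt hv.contDiffOn.continuousOn
      (fun r hr => (hv.hasDerivAt hr).congr_deriv (by rw [derivDivId_of_pos hr]; field_simp))
      (hv.continuousOn_derivDivId hN) (div_nonneg hs hc.le)

theorem hasDerivWithinAt_derivDivId_comp_sqrt_div (hv : RadialProfile N p v) (hN : 0 < N)
    (hc : 0 < c) (hs : 0 ≤ s) :
    HasDerivWithinAt (fun t => derivDivId N v √(t / c) / 2 / c)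
      (derivDivId₂ N p v √(s / c) / 4 / c / c) (Ici 0) s := by
  have h := (hasDerivWithinAt_comp_sqrt (hv.continuousOn_derivDivId hN)
    (fun _ hr => hv.hasDerivAt_derivDivId hr) (hv.continuousOn_derivDivId₂ hN)
    (div_nonneg hs hc.le)).div_const 2
  exact (hasDerivWithinAt_Ici_comp_div_const (f := fun t => derivDivId N v √t / 2)
    (f' := fun t => derivDivId₂ N p v √t / 4) hc (h.congr_deriv (by ring))).div_const c

theorem contDiff_comp_norm_div {E : Type*} [NormedAddCommGroup E] [InnerProductSpace ℝ E]
    {ε : ℝ} (hv : RadialProfile N p v) (hN : 0 < N) (hε : 0 < ε) :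
    ContDiff ℝ 2 (fun x : E => v (‖x‖ / ε)) := by
  have hc : 0 < ε ^ 2 := by positivity
  have hcont : ContinuousOn (fun s => derivDivId₂ N p v √(s / ε ^ 2) / 4 / ε ^ 2 / ε ^ 2)
      (Ici 0) :=
    (((hv.continuousOn_derivDivId₂ hN).comp
      (Real.continuous_sqrt.comp (continuous_id.div_const _)).continuousOn
      fun s _ => Real.sqrt_nonneg _).div_const 4).div_const _ |>.div_const _
  have hC2 := contDiffOn_two_of_hasDerivWithinAt (uniqueDiffOn_Ici 0)
    (fun s hs => hv.hasDerivWithinAt_comp_sqrt_div hN hc hs)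
    (fun s hs => hv.hasDerivWithinAt_derivDivId_comp_sqrt_div hN hc hs) hcont
  have hu : (fun x : E => v (‖x‖ / ε)) = (fun t => v √(t / ε ^ 2)) ∘ fun x => ‖x‖ ^ 2 := by
    funext x
    simp [← div_pow, Real.sqrt_sq (div_nonneg (norm_nonneg x) hε.le)]
  rw [hu]
  exact hC2.comp_contDiff (contDiff_norm_sq ℝ) fun x => sq_nonneg ‖x‖

theorem laplacian_affine_comp_norm_div {ε : ℝ} (hv : RadialProfile N p v) (hN : 0 < N)
    (hε : 0 < ε) (a b : ℝ) (x : EuclideanSpace ℝ (Fin N)) :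
    laplacian (fun y => a + b * v (‖y‖ / ε)) x = b / ε ^ 2 * v (‖x‖ / ε) ^ p := by
  have hc : 0 < ε ^ 2 := by positivity
  have hr (y : EuclideanSpace ℝ (Fin N)) : √(‖y‖ ^ 2 / ε ^ 2) = ‖y‖ / ε := by
    rw [← div_pow, Real.sqrt_sq (div_nonneg (norm_nonneg y) hε.le)]
  have hu : (fun y : EuclideanSpace ℝ (Fin N) => a + b * v (‖y‖ / ε)) =
      fun y => a + b * v √(‖y‖ ^ 2 / ε ^ 2) := by
    simp only [hr]
  rw [hu, laplacian_comp_norm_sq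
    (fun s hs => ((hv.hasDerivWithinAt_comp_sqrt_div hN hc hs).const_mul b).const_add a)
    (fun s hs => (hv.hasDerivWithinAt_derivDivId_comp_sqrt_div hN hc hs).const_mul b), hr,
    ← hv.derivDivId_add hN (div_nonneg (norm_nonneg x) hε.le)]
  field_simp

end RadialProfile

theorem stmt_10_general {N : ℕ} (hN : 2 ≤ N) (t₀ : ℝ)
    (p : ℝ) (lam : ℝ) (hlam : lam < 0)
    (v : ℝ → ℝ) (hv : ContDiffOn ℝ 2 v (Ici 0)) (hvpos : ∀ r ≥ (0:ℝ), 0 < v r)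
    (hv0 : v 0 = 1) (hv'0 : derivWithin v (Ici 0) 0 = 0)
    (hode : ∀ r > (0:ℝ), deriv (deriv v) r + (((N:ℝ) - 1)/r) * deriv v r = v r ^ p)
    (α : ℝ) (hα : 0 < α) (ε : ℝ) (hε : ε = Real.sqrt (α ^ (1 - p) / (-lam)))
    (hmatch : α * v (1/ε) = -t₀) :
    ContinuousOn (fun x : EuclideanSpace ℝ (Fin N) => t₀ + α * v (‖x‖ / ε))
        (Metric.closedBall 0 1) ∧
      ContDiffOn ℝ 2 (fun x : EuclideanSpace ℝ (Fin N) => t₀ + α * v (‖x‖ / ε))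
        (Metric.ball 0 1) ∧
      (∀ x ∈ Metric.ball (0 : EuclideanSpace ℝ (Fin N)) 1,
        -laplacian (fun y => t₀ + α * v (‖y‖ / ε)) x
          = lam * (max ((t₀ + α * v (‖x‖ / ε)) - t₀) 0) ^ p) ∧
      (∀ x : EuclideanSpace ℝ (Fin N), ‖x‖ = 1 → t₀ + α * v (‖x‖ / ε) = 0) := by
  have hprof : RadialProfile N p v := ⟨hv, hvpos, hv0, hv'0, hode⟩
  have hN0 : 0 < N := by omega
  have hX : 0 < α ^ (1 - p) / (-lam) := div_pos (by positivity) (neg_pos.2 hlam)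
  have hε0 : 0 < ε := hε ▸ Real.sqrt_pos.2 hX
  have hscale : α / ε ^ 2 = -lam * α ^ p := by
    have hα1 : α ^ p * α ^ (1 - p) = α := by rw [← Real.rpow_add hα]; simp
    rw [hε, Real.sq_sqrt hX.le]
    field_simp
    linear_combination lam * hα1
  have hC2 : ContDiff ℝ 2 (fun x : EuclideanSpace ℝ (Fin N) => t₀ + α * v (‖x‖ / ε)) :=
    contDiff_const.add (contDiff_const.mul (hprof.contDiff_comp_norm_div hN0 hε0))
  refine ⟨hC2.continuous.continuousOn, hC2.contDiffOn, fun x _ => ?_, fun x hx => ?_⟩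
  · have hvx := hvpos _ (div_nonneg (norm_nonneg x) hε0.le)
    rw [hprof.laplacian_affine_comp_norm_div hN0 hε0, add_sub_cancel_left,
      max_eq_left (mul_pos hα hvx).le, Real.mul_rpow hα.le hvx.le, hscale]
    ring
  · rw [hx, hmatch]
    ring

/-- Corollary 1.4(ii), explicit solution in the unit ball: if `v` solves the radial ODE
`v'' + ((N-1)/r) v' = v^p` with `v(0) = 1`, `v'(0) = 0`, and `α, ε` are such that
`α v(1/ε) = -t₀` with `ε = √(α^{1-p}/(-λ))`, then `u(x) = t₀ + α v(|x|/ε)` is a classical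
solution of `-Δu = λ ((u - t₀)⁺)^p` in `B₁` vanishing on the unit sphere. -/
theorem stmt_10 {N : ℕ} (hN : 2 ≤ N) (t₀ : ℝ) (ht₀ : t₀ < 0)
    (p : ℝ) (hp0 : 0 ≤ p) (hp1 : p ≤ 1) (lam : ℝ) (hlam : lam < 0)
    (v : ℝ → ℝ) (hv : ContDiffOn ℝ 2 v (Ici 0)) (hvpos : ∀ r ≥ (0:ℝ), 0 < v r)
    (hv0 : v 0 = 1) (hv'0 : derivWithin v (Ici 0) 0 = 0)
    (hode : ∀ r > (0:ℝ), deriv (deriv v) r + (((N:ℝ) - 1)/r) * deriv v r = v r ^ p)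
    (α : ℝ) (hα : 0 < α) (ε : ℝ) (hε : ε = Real.sqrt (α ^ (1 - p) / (-lam)))
    (hmatch : α * v (1/ε) = -t₀) :
    ContinuousOn (fun x : EuclideanSpace ℝ (Fin N) => t₀ + α * v (‖x‖ / ε))
        (Metric.closedBall 0 1) ∧
      ContDiffOn ℝ 2 (fun x : EuclideanSpace ℝ (Fin N) => t₀ + α * v (‖x‖ / ε))
        (Metric.ball 0 1) ∧
      (∀ x ∈ Metric.ball (0 : EuclideanSpace ℝ (Fin N)) 1,
        -laplacian (fun y => t₀ + α * v (‖y‖ / ε)) x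
          = lam * (max ((t₀ + α * v (‖x‖ / ε)) - t₀) 0) ^ p) ∧
      (∀ x : EuclideanSpace ℝ (Fin N), ‖x‖ = 1 → t₀ + α * v (‖x‖ / ε) = 0) :=
  stmt_10_general hN t₀ p lam hlam v hv hvpos hv0 hv'0 hode α hα ε hε hmatch
end

section
/- Let t₀ < 0 and let f : ℝ → ℝ be non-decreasing with f(t) = 0 for every t ≤ t₀ and f(t) > 0 for every t > t₀. Let α : (t₀, 0) → (0, ∞) be continuous with α(β) → 0 and (β − t₀)/α(β) → t̄ as β → t₀⁺, where t̄ ∈ (0, ∞). Let g : (−t̄, ∞) → ℝ be continuous and suppose f(α(β) t + β)/f(β) → g(t) as β → t₀⁺, locally uniformly in t ∈ (−t̄, ∞). Then there exists p ≥ 0 such that g(t) = ((t + t̄)/t̄)^p for every t > −t̄, and f(α(β) s + t₀)/f(β) → (s/t̄)^p as β → t₀⁺, locally uniformly in s ∈ (0, ∞). -/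
open Set Filter Topology
open scoped Uniformity

/-!
With `F_β(t) = f(α(β)t + β)/f(β)` and `r(β) = (β - t₀)/α(β) → t̄`, shifting the variable gives
`f(α(β)s + t₀)/f(β) = F_β(s - r(β))`, so these quotients converge locally uniformly to
`h(s) = g(s - t̄)`. Writing `f(α(β)ab + t₀)/f(β)` as the product of `f(β')/f(β)` and
`f(α(β')u + t₀)/f(β')`, where `β' = α(β)a + t₀` and `u = α(β)ab/α(β') → t̄b`, gives
`h(ab) = h(a) h(t̄b)`. Hence `x ↦ h(t̄x)` is a continuous positive multiplicative function on
`(0, ∞)`, i.e. a power `x ^ p`, and `p ≥ 0` because `h` inherits the monotonicity of `f`.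
-/

section LocallyUniform

variable {ι κ X Y : Type*} [TopologicalSpace X] [UniformSpace Y] {F : ι → X → Y} {g : X → Y}
  {l : Filter ι} {s : Set X}

theorem TendstoLocallyUniformlyOn.comp_tendsto (hF : TendstoLocallyUniformlyOn F g l s)
    {l' : Filter κ} {m : κ → ι} (hm : Tendsto m l' l) :
    TendstoLocallyUniformlyOn (fun i => F (m i)) g l' s :=
  fun u hu x hx => (hF u hu x hx).imp fun _ ⟨ht, h⟩ => ⟨ht, hm.eventually h⟩

theorem TendstoLocallyUniformlyOn.tendsto_comp_of_isOpen (hF : TendstoLocallyUniformlyOn F g l s)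
    (hs : IsOpen s) (hg : ContinuousOn g s) {u : ι → X} {c : X} (hc : c ∈ s)
    (hu : Tendsto u l (𝓝 c)) : Tendsto (fun i => F i (u i)) l (𝓝 (g c)) :=
  hF.tendsto_comp (hg c hc) hc (hs.nhdsWithin_eq hc ▸ hu)

theorem TendstoLocallyUniformlyOn.comp_sub_tendsto [AddGroup X] [IsTopologicalAddGroup X]
    (hF : TendstoLocallyUniformlyOn F g l s) (hs : IsOpen s) (hg : ContinuousOn g s)
    {r : ι → X} {c : X} (hr : Tendsto r l (𝓝 c)) :
    TendstoLocallyUniformlyOn (fun i x => F i (x - r i)) (fun x => g (x - c)) l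
      ((· - c) ⁻¹' s) := by
  rw [(hs.preimage (continuous_sub_right c)).tendstoLocallyUniformlyOn_iff_forall_tendsto]
  rw [hs.tendstoLocallyUniformlyOn_iff_forall_tendsto] at hF
  intro x hx
  have hshift : Tendsto (fun q : ι × X => q.2 - r q.1) (l ×ˢ 𝓝 x) (𝓝 (x - c)) :=
    tendsto_snd.sub (hr.comp tendsto_fst)
  have hgx : Tendsto g (𝓝 (x - c)) (𝓝 (g (x - c))) := (hg.continuousAt (hs.mem_nhds hx)).tendsto
  have hclose : Tendsto (fun q : ι × X => (g (q.2 - c), g (q.2 - r q.1))) (l ×ˢ 𝓝 x) (𝓤 Y) :=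
    ((hgx.comp (tendsto_snd.sub_const c)).prodMk_nhds (hgx.comp hshift)).mono_right
      (nhds_le_uniformity _)
  exact hclose.uniformity_trans ((hF _ hx).comp (tendsto_fst.prodMk hshift))

end LocallyUniform

theorem exists_rpow_of_map_mul {φ : ℝ → ℝ} (hφ : ContinuousOn φ (Ioi 0))
    (hnonneg : ∀ x, 0 < x → 0 ≤ φ x) (hone : φ 1 = 1)
    (hmul : ∀ x, 0 < x → ∀ y, 0 < y → φ (x * y) = φ x * φ y) :
    ∃ p : ℝ, ∀ x, 0 < x → φ x = x ^ p := by
  have hpos : ∀ x, 0 < x → 0 < φ x := by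
    intro x hx
    refine (hnonneg x hx).lt_of_ne fun h0 => ?_
    have := hmul x hx x⁻¹ (inv_pos.mpr hx)
    rw [mul_inv_cancel₀ hx.ne', hone, ← h0, zero_mul] at this
    exact one_ne_zero this
  let ψ : ℝ →+ ℝ := AddMonoidHom.mk' (fun y => Real.log (φ (Real.exp y))) fun y z => by
    rw [Real.exp_add, hmul _ (Real.exp_pos y) _ (Real.exp_pos z),
      Real.log_mul (hpos _ (Real.exp_pos y)).ne' (hpos _ (Real.exp_pos z)).ne']
  have hψ : Continuous ψ := by
    show Continuous fun y => Real.log (φ (Real.exp y))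
    exact ContinuousOn.comp_continuous
      (Real.continuousOn_log.comp hφ fun x hx => (hpos x hx).ne') Real.continuous_exp Real.exp_pos
  refine ⟨ψ 1, fun x hx => ?_⟩
  have hlin : ψ (Real.log x) = Real.log x * ψ 1 := by
    simpa using map_real_smul ψ hψ (Real.log x) 1
  have hψlog : ψ (Real.log x) = Real.log (φ x) := by
    simp only [ψ, AddMonoidHom.mk'_apply, Real.exp_log hx]
  rw [Real.rpow_def_of_pos hx, ← hlin, hψlog, Real.exp_log (hpos x hx)]

section RegularVariation

variable {t₀ tb : ℝ} {f α h : ℝ → ℝ}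

theorem tendsto_mul_add_nhdsWithin_Ioo (ht₀ : t₀ < 0) (hαpos : ∀ β ∈ Ioo t₀ 0, 0 < α β)
    (hα0 : Tendsto α (𝓝[Ioo t₀ 0] t₀) (𝓝 0)) {a : ℝ} (ha : 0 < a) :
    Tendsto (fun β => α β * a + t₀) (𝓝[Ioo t₀ 0] t₀) (𝓝[Ioo t₀ 0] t₀) := by
  have hlim : Tendsto (fun β => α β * a + t₀) (𝓝[Ioo t₀ 0] t₀) (𝓝 t₀) := by
    simpa using (hα0.mul_const a).add_const t₀
  refine tendsto_nhdsWithin_iff.mpr ⟨hlim, ?_⟩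
  filter_upwards [hlim.eventually_lt_const ht₀, self_mem_nhdsWithin] with β hlt hβ
  exact ⟨lt_add_of_pos_left _ (mul_pos (hαpos β hβ) ha), hlt⟩

variable (ht₀ : t₀ < 0) (hfpos : ∀ t, t₀ < t → 0 < f t) (hαpos : ∀ β ∈ Ioo t₀ 0, 0 < α β)
  (hα0 : Tendsto α (𝓝[Ioo t₀ 0] t₀) (𝓝 0)) (htb : 0 < tb)
  (hαlim : Tendsto (fun β => (β - t₀) / α β) (𝓝[Ioo t₀ 0] t₀) (𝓝 tb))
  (hH : TendstoLocallyUniformlyOn (fun β s => f (α β * s + t₀) / f β) h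
    (𝓝[Ioo t₀ 0] t₀) (Ioi 0))
  (hh : ContinuousOn h (Ioi 0))
include ht₀ hfpos hαpos hα0 htb hαlim hH hh

theorem map_mul_of_tendstoLocallyUniformlyOn {a b : ℝ} (ha : 0 < a) (hb : 0 < b) :
    h (a * b) = h a * h (tb * b) := by
  have := left_nhdsWithin_Ioo_neBot ht₀
  have hB := tendsto_mul_add_nhdsWithin_Ioo ht₀ hαpos hα0 ha
  have hu :
      Tendsto (fun β => α β * (a * b) / α (α β * a + t₀)) (𝓝[Ioo t₀ 0] t₀) (𝓝 (tb * b)) := by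
    refine ((hαlim.comp hB).mul_const b).congr fun β => ?_
    simp only [Function.comp_apply, add_sub_cancel_right]
    ring
  have hsplit : ∀ᶠ β in 𝓝[Ioo t₀ 0] t₀, f (α β * (a * b) + t₀) / f β =
      f (α β * a + t₀) / f β *
        (f (α (α β * a + t₀) * (α β * (a * b) / α (α β * a + t₀)) + t₀) / f (α β * a + t₀)) := by
    filter_upwards [hB.eventually self_mem_nhdsWithin] with β hBβ
    rw [mul_div_cancel₀ _ (hαpos _ hBβ).ne', mul_comm (f (α β * a + t₀) / f β),
      div_mul_div_cancel₀ (hfpos _ hBβ.1).ne']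
  exact tendsto_nhds_unique (hH.tendsto_at (mul_pos ha hb))
    (((hH.tendsto_at ha).mul ((hH.comp_tendsto hB).tendsto_comp_of_isOpen isOpen_Ioi hh
      (mul_pos htb hb) hu)).congr' (hsplit.mono fun _ h => h.symm))

theorem exists_rpow_of_tendstoLocallyUniformlyOn (hf : Monotone f) :
    ∃ p ≥ (0 : ℝ), ∀ s, 0 < s → h s = (s / tb) ^ p := by
  have := left_nhdsWithin_Ioo_neBot ht₀
  have hev : ∀ᶠ β in 𝓝[Ioo t₀ 0] t₀, β ∈ Ioo t₀ 0 := self_mem_nhdsWithin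
  have hone : h tb = 1 := by
    refine tendsto_nhds_unique (hH.tendsto_comp_of_isOpen isOpen_Ioi hh htb hαlim)
      (tendsto_const_nhds.congr' (hev.mono fun β hβ => ?_))
    dsimp only
    rw [mul_div_cancel₀ _ (hαpos β hβ).ne', sub_add_cancel, div_self (hfpos β hβ.1).ne']
  have hnonneg : ∀ s, 0 < s → 0 ≤ h s := fun s hs =>
    ge_of_tendsto (hH.tendsto_at hs) (hev.mono fun β hβ =>
      (div_pos (hfpos _ (lt_add_of_pos_left _ (mul_pos (hαpos β hβ) hs))) (hfpos β hβ.1)).le)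
  have hmono : MonotoneOn h (Ioi 0) := fun s hs s' hs' hss' =>
    le_of_tendsto_of_tendsto (hH.tendsto_at hs) (hH.tendsto_at hs') (hev.mono fun β hβ =>
      div_le_div_of_nonneg_right (hf (by gcongr; exact (hαpos β hβ).le)) (hfpos β hβ.1).le)
  obtain ⟨p, hp⟩ := exists_rpow_of_map_mul (φ := fun x => h (tb * x))
    (hh.comp (continuousOn_const.mul continuousOn_id) fun x hx => mul_pos htb hx)
    (fun x hx => hnonneg _ (mul_pos htb hx)) (by simpa using hone)
    (fun x hx y hy => by
      simpa only [mul_assoc] using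
        map_mul_of_tendstoLocallyUniformlyOn ht₀ hfpos hαpos hα0 htb hαlim hH hh
          (mul_pos htb hx) hy)
  refine ⟨p, ?_, fun s hs => ?_⟩
  · have h12 : h (tb * 1) ≤ h (tb * 2) :=
      hmono (mul_pos htb one_pos) (mul_pos htb two_pos) (by linarith)
    rw [hp 1 one_pos, hp 2 two_pos, Real.one_rpow] at h12
    simpa using (Real.rpow_le_rpow_left_iff one_lt_two).mp (by simpa using h12)
  · rw [← hp _ (div_pos hs htb), mul_div_cancel₀ _ htb.ne']

end RegularVariation

theorem stmt_15_general (t₀ : ℝ) (ht₀ : t₀ < 0) (f : ℝ → ℝ) (hf : Monotone f)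
    (hfpos : ∀ t, t₀ < t → 0 < f t)
    (α : ℝ → ℝ) (hαpos : ∀ β ∈ Ioo t₀ 0, 0 < α β)
    (hα0 : Tendsto α (𝓝[Ioo t₀ 0] t₀) (𝓝 0))
    (tb : ℝ) (htb : 0 < tb)
    (hαlim : Tendsto (fun β => (β - t₀) / α β) (𝓝[Ioo t₀ 0] t₀) (𝓝 tb))
    (g : ℝ → ℝ) (hgc : ContinuousOn g (Ioi (-tb)))
    (hconv : TendstoLocallyUniformlyOn (fun β t => f (α β * t + β) / f β) g
      (𝓝[Ioo t₀ 0] t₀) (Ioi (-tb))) :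
    ∃ p ≥ (0:ℝ), (∀ t, -tb < t → g t = ((t + tb)/tb) ^ p) ∧
      TendstoLocallyUniformlyOn (fun β s => f (α β * s + t₀) / f β)
        (fun s => (s / tb) ^ p) (𝓝[Ioo t₀ 0] t₀) (Ioi 0) := by
  have hpre : (· - tb) ⁻¹' Ioi (-tb) = Ioi 0 := by ext s; simp
  have hH : TendstoLocallyUniformlyOn (fun β s => f (α β * s + t₀) / f β) (fun s => g (s - tb))
      (𝓝[Ioo t₀ 0] t₀) (Ioi 0) := by
    refine hpre ▸ (hconv.comp_sub_tendsto isOpen_Ioi hgc hαlim).congr_inseparable ?_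
    filter_upwards [self_mem_nhdsWithin] with β hβ s _
    refine .of_eq ?_
    rw [mul_sub, mul_div_cancel₀ _ (hαpos β hβ).ne']
    ring_nf
  have hh : ContinuousOn (fun s => g (s - tb)) (Ioi 0) :=
    hgc.comp (continuousOn_id.sub continuousOn_const) fun s hs => by simpa using hs
  obtain ⟨p, hp, hpow⟩ :=
    exists_rpow_of_tendstoLocallyUniformlyOn ht₀ hfpos hαpos hα0 htb hαlim hH hh hf
  refine ⟨p, hp, fun t ht => ?_, hH.congr_right fun s hs => hpow s hs⟩
  simpa using hpow (t + tb) (by simpa [neg_lt_iff_pos_add] using ht)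

/-- Lemma A.1(3): if `(β - t₀)/α(β) → t̄ ∈ (0, ∞)` and `f(α(β)t + β)/f(β) → g(t)` locally
uniformly in `t > -t̄`, then `g(t) = ((t + t̄)/t̄)^p` for some `p ≥ 0` and
`f(α(β)s + t₀)/f(β) → (s/t̄)^p` locally uniformly in `s > 0`. -/
theorem stmt_15 (t₀ : ℝ) (ht₀ : t₀ < 0) (f : ℝ → ℝ) (hf : Monotone f)
    (hf0 : ∀ t ≤ t₀, f t = 0) (hfpos : ∀ t, t₀ < t → 0 < f t)
    (α : ℝ → ℝ) (hαc : ContinuousOn α (Ioo t₀ 0)) (hαpos : ∀ β ∈ Ioo t₀ 0, 0 < α β)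
    (hα0 : Tendsto α (𝓝[Ioo t₀ 0] t₀) (𝓝 0))
    (tb : ℝ) (htb : 0 < tb)
    (hαlim : Tendsto (fun β => (β - t₀) / α β) (𝓝[Ioo t₀ 0] t₀) (𝓝 tb))
    (g : ℝ → ℝ) (hgc : ContinuousOn g (Ioi (-tb)))
    (hconv : TendstoLocallyUniformlyOn (fun β t => f (α β * t + β) / f β) g
      (𝓝[Ioo t₀ 0] t₀) (Ioi (-tb))) :
    ∃ p ≥ (0:ℝ), (∀ t, -tb < t → g t = ((t + tb)/tb) ^ p) ∧
      TendstoLocallyUniformlyOn (fun β s => f (α β * s + t₀) / f β)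
        (fun s => (s / tb) ^ p) (𝓝[Ioo t₀ 0] t₀) (Ioi 0) :=
  stmt_15_general t₀ ht₀ f hf hfpos α hαpos hα0 tb htb hαlim g hgc hconv
end

section
/- Let f : ℝ → ℝ be non-decreasing with f(t) > 0 for every t ∈ ℝ and f(t) → 0 as t → −∞. Let α : (−∞, 0) → (0, ∞) be continuous and suppose β/α(β) → t̄ as β → −∞, where t̄ ∈ (−∞, 0). Let g : (−∞, −t̄) → ℝ be continuous and suppose f(α(β) t + β)/f(β) → g(t) as β → −∞, locally uniformly in t ∈ (−∞, −t̄). Then there exists p ≥ 0 such that g(t) = (t̄/(t + t̄))^p for every t < −t̄, and f(α(β) s)/f(β) → (t̄/s)^p as β → −∞, locally uniformly in s ∈ (−∞, 0). -/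
/-!
Since `α β * s = α β * (s - β / α β) + β` and `β / α β → t̄`, the hypothesis gives
`f (α β * s) / f β → L s := g (s - t̄)` locally uniformly on `s < 0`. Splitting
`f (α β * s₁ * s₂ / t̄) / f β` at the intermediate point `u = α β * s₁ → -∞` yields the
functional equation `L (s₁ * s₂ / t̄) = L s₁ * L s₂`; moreover `L t̄ = g 0 = 1` and `L` is
monotone because `f` is. Hence `x ↦ L (t̄ / x)` is monotone and multiplicative on `(0, ∞)`, so
after taking logarithms Cauchy's equation for monotone functions makes it a power `x ^ p`, `p ≥ 0`.
-/

open Set Filter Topology Uniformity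

theorem eq_mul_of_map_add_of_monotone {φ : ℝ → ℝ} (hadd : ∀ x y, φ (x + y) = φ x + φ y)
    (hmono : Monotone φ) (x : ℝ) : φ x = φ 1 * x := by
  have hrat : ∀ q : ℚ, φ q = φ 1 * q := fun q => by
    simpa [Rat.smul_def, mul_comm] using map_rat_smul (AddMonoidHom.mk' φ hadd) q 1
  have hzero : φ 0 = 0 := by simpa using hrat 0
  have hnonneg : 0 ≤ φ 1 := hzero ▸ hmono zero_le_one
  rcases hnonneg.eq_or_lt with h0 | hpos
  · obtain ⟨q, hq⟩ := exists_rat_lt x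
    obtain ⟨r, hr⟩ := exists_rat_gt x
    have hlo := hmono hq.le
    have hhi := hmono hr.le
    rw [hrat, ← h0, zero_mul] at hlo hhi
    rw [← h0, zero_mul]
    exact le_antisymm hhi hlo
  · rw [mul_comm, ← div_eq_iff hpos.ne']
    refine le_antisymm (le_of_forall_lt_rat_imp_le fun q hq => ?_)
      (le_of_forall_rat_lt_imp_le fun q hq => ?_)
    · rw [div_le_iff₀ hpos, mul_comm, ← hrat]; exact hmono hq.le
    · rw [le_div_iff₀ hpos, mul_comm, ← hrat]; exact hmono hq.le

theorem exists_rpow_of_map_mul_of_monotoneOn {ψ : ℝ → ℝ}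
    (hmul : ∀ x > 0, ∀ y > 0, ψ (x * y) = ψ x * ψ y) (hone : ψ 1 = 1)
    (hmono : MonotoneOn ψ (Ioi 0)) : ∃ p ≥ (0 : ℝ), ∀ x > 0, ψ x = x ^ p := by
  have hpos : ∀ x > 0, 0 < ψ x := fun x hx => by
    have hne : ψ x ≠ 0 := fun h => by
      simpa [← hmul x hx _ (inv_pos.2 hx), mul_inv_cancel₀ hx.ne', hone] using
        congrArg (· * ψ x⁻¹) h
    have hsq : ψ x = ψ √x ^ 2 := by
      rw [sq, ← hmul _ (Real.sqrt_pos.2 hx) _ (Real.sqrt_pos.2 hx), Real.mul_self_sqrt hx.le]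
    exact (hsq ▸ sq_nonneg _).lt_of_ne' hne
  set φ : ℝ → ℝ := fun t => Real.log (ψ (Real.exp t))
  have hadd : ∀ s t, φ (s + t) = φ s + φ t := fun s t => by
    simp only [φ, Real.exp_add, hmul _ (Real.exp_pos s) _ (Real.exp_pos t),
      Real.log_mul (hpos _ (Real.exp_pos s)).ne' (hpos _ (Real.exp_pos t)).ne']
  have hφmono : Monotone φ := fun s t hst =>
    Real.log_le_log (hpos _ (Real.exp_pos s))
      (hmono (Real.exp_pos s) (Real.exp_pos t) (Real.exp_le_exp.2 hst))
  refine ⟨φ 1, ?_, fun x hx => ?_⟩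
  · simpa [φ, hone] using hφmono zero_le_one
  · rw [Real.rpow_def_of_pos hx, mul_comm, ← eq_mul_of_map_add_of_monotone hadd hφmono]
    simp only [φ, Real.exp_log hx, Real.exp_log (hpos x hx)]

theorem TendstoLocallyUniformlyOn.comp_tendsto_s16 {ι ι' α β : Type*} [TopologicalSpace α]
    [UniformSpace β] {F : ι → α → β} {f : α → β} {p : Filter ι} {s : Set α}
    (h : TendstoLocallyUniformlyOn F f p s) {p' : Filter ι'} {u : ι' → ι}
    (hu : Tendsto u p' p) : TendstoLocallyUniformlyOn (fun i => F (u i)) f p' s :=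
  fun v hv x hx =>
    let ⟨t, ht, hev⟩ := h v hv x hx
    ⟨t, ht, hu.eventually hev⟩

theorem TendstoLocallyUniformlyOn.comp_sub_tendsto_s16 {ι α β : Type*} [TopologicalSpace α]
    [AddGroup α] [IsTopologicalAddGroup α] [UniformSpace β] {F : ι → α → β} {f : α → β}
    {p : Filter ι} {U V : Set α} (hF : TendstoLocallyUniformlyOn F f p U) (hU : IsOpen U)
    (hV : IsOpen V) (hf : ContinuousOn f U) {c : ι → α} {c₀ : α} (hc : Tendsto c p (𝓝 c₀))
    (hVU : MapsTo (· - c₀) V U) :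
    TendstoLocallyUniformlyOn (fun i x => F i (x - c i)) (fun x => f (x - c₀)) p V := by
  rw [hU.tendstoLocallyUniformlyOn_iff_forall_tendsto] at hF
  rw [hV.tendstoLocallyUniformlyOn_iff_forall_tendsto]
  intro x hx
  have hshift : Tendsto (fun y : ι × α => y.2 - c y.1) (p ×ˢ 𝓝 x) (𝓝 (x - c₀)) :=
    tendsto_snd.sub (hc.comp tendsto_fst)
  have hfx : ContinuousAt f (x - c₀) := hf.continuousAt (hU.mem_nhds (hVU hx))
  have hnear : Tendsto (fun y : ι × α => (f (y.2 - c₀), f (y.2 - c y.1))) (p ×ˢ 𝓝 x) (𝓤 β) :=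
    (nhds_le_uniformity _).trans'
      ((hfx.tendsto.comp (tendsto_snd.sub_const c₀)).prodMk_nhds (hfx.tendsto.comp hshift))
  exact hnear.uniformity_trans ((hF _ (hVU hx)).comp (tendsto_fst.prodMk hshift))

theorem map_mul_div_of_tendstoLocallyUniformlyOn {f α L : ℝ → ℝ} {tb : ℝ} (htb : tb < 0)
    (hf : ∀ t, f t ≠ 0) (hα : Tendsto α atBot atTop)
    (hlim : Tendsto (fun β => β / α β) atBot (𝓝 tb)) (hL : ContinuousOn L (Iio 0))
    (hconv : TendstoLocallyUniformlyOn (fun β s => f (α β * s) / f β) L atBot (Iio 0))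
    {s₁ s₂ : ℝ} (hs₁ : s₁ < 0) (hs₂ : s₂ < 0) : L (s₁ * s₂ / tb) = L s₁ * L s₂ := by
  set u : ℝ → ℝ := fun β => α β * s₁
  have hu : Tendsto u atBot atBot := hα.atTop_mul_const_of_neg hs₁
  set w : ℝ → ℝ := fun β => s₂ / tb * (u β / α (u β))
  have hw : Tendsto w atBot (𝓝 s₂) := by
    simpa [div_mul_cancel₀ _ htb.ne] using (hlim.comp hu).const_mul (s₂ / tb)
  -- `α (u β) * w β = α β * (s₁ * s₂ / tb)`, so the quotient telescopes through `f (u β)`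
  have hfactor : Tendsto (fun β => f (α (u β) * w β) / f (u β) * (f (α β * s₁) / f β)) atBot
      (𝓝 (L s₂ * L s₁)) :=
    ((hconv.comp_tendsto_s16 hu).tendsto_comp (hL.continuousWithinAt hs₂) hs₂
      (tendsto_nhdsWithin_iff.2 ⟨hw, hw.eventually (Iio_mem_nhds hs₂)⟩)).mul
      (hconv.tendsto_at hs₁)
  rw [mul_comm (L s₁)]
  refine tendsto_nhds_unique ((hconv.tendsto_at ?_).congr' ?_) hfactor
  · exact div_neg_of_pos_of_neg (mul_pos_of_neg_of_neg hs₁ hs₂) htb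
  filter_upwards [(hα.comp hu).eventually_ne_atTop 0] with β hβ
  rw [div_mul_div_cancel₀ (hf _)]
  congr 2
  simp only [w, Function.comp_apply] at hβ ⊢
  field_simp
  ring

theorem exists_eq_div_rpow_of_map_mul_div {L : ℝ → ℝ} {tb : ℝ} (htb : tb < 0)
    (hmul : ∀ s₁ < 0, ∀ s₂ < 0, L (s₁ * s₂ / tb) = L s₁ * L s₂) (hone : L tb = 1)
    (hmono : MonotoneOn L (Iio 0)) : ∃ p ≥ (0 : ℝ), ∀ s < 0, L s = (tb / s) ^ p := by
  have hneg : ∀ x > 0, tb / x < 0 := fun x hx => div_neg_of_neg_of_pos htb hx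
  obtain ⟨p, hp, hψ⟩ := exists_rpow_of_map_mul_of_monotoneOn (ψ := fun x => L (tb / x))
    (fun x hx y hy => by
      simpa only [div_mul_div_comm, mul_div_assoc, mul_div_cancel_left₀ _ htb.ne] using
        hmul _ (hneg x hx) _ (hneg y hy))
    (by simpa using hone)
    (fun x hx y hy hxy => hmono (hneg x hx) (hneg y hy) <| by
      simpa only [div_eq_mul_inv] using mul_le_mul_of_nonpos_left (inv_anti₀ hx hxy) htb.le)
  refine ⟨p, hp, fun s hs => ?_⟩
  simpa [div_div_cancel₀ htb.ne] using hψ (tb / s) (div_pos_of_neg_of_neg htb hs)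

theorem stmt_16_general (f : ℝ → ℝ) (hf : Monotone f) (hfpos : ∀ t, 0 < f t)
    (α : ℝ → ℝ)
    (tb : ℝ) (htb : tb < 0)
    (hlim : Tendsto (fun β => β / α β) atBot (𝓝 tb))
    (g : ℝ → ℝ) (hgc : ContinuousOn g (Iio (-tb)))
    (hconv : TendstoLocallyUniformlyOn (fun β t => f (α β * t + β) / f β) g
      atBot (Iio (-tb))) :
    ∃ p ≥ (0:ℝ), (∀ t, t < -tb → g t = (tb/(t + tb)) ^ p) ∧
      TendstoLocallyUniformlyOn (fun β s => f (α β * s) / f β)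
        (fun s => (tb / s) ^ p) atBot (Iio 0) := by
  have hα : Tendsto α atBot atTop := by
    refine (tendsto_id.atBot_mul_neg (inv_neg''.2 htb) (hlim.inv₀ htb.ne)).congr' ?_
    filter_upwards [eventually_lt_atBot 0] with β hβ
    rw [id, inv_div, mul_div_cancel₀ _ hβ.ne]
  set L : ℝ → ℝ := fun s => g (s - tb)
  have hmaps : MapsTo (· - tb) (Iio 0) (Iio (-tb)) := fun s (hs : s < 0) => by
    simp only [mem_Iio]; linarith
  have hLconv : TendstoLocallyUniformlyOn (fun β s => f (α β * s) / f β) L atBot (Iio 0) := by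
    refine (hconv.comp_sub_tendsto_s16 isOpen_Iio isOpen_Iio hgc hlim hmaps).congr_inseparable ?_
    filter_upwards [hα.eventually_ne_atTop 0] with β hβ s _
    rw [mul_sub, mul_div_cancel₀ _ hβ, sub_add_cancel]
  have hg0 : g 0 = 1 :=
    tendsto_nhds_unique (hconv.tendsto_at (neg_pos.2 htb)) <| tendsto_const_nhds.congr fun β => by
      rw [mul_zero, zero_add, div_self (hfpos β).ne']
  have hLmono : MonotoneOn L (Iio 0) := fun s₁ hs₁ s₂ hs₂ h =>
    le_of_tendsto_of_tendsto (hLconv.tendsto_at hs₁) (hLconv.tendsto_at hs₂) <| by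
      filter_upwards [hα.eventually_gt_atTop 0] with β hβ
      exact div_le_div_of_nonneg_right (hf (mul_le_mul_of_nonneg_left h hβ.le)) (hfpos β).le
  obtain ⟨p, hp, hLeq⟩ := exists_eq_div_rpow_of_map_mul_div htb
    (fun s₁ hs₁ s₂ hs₂ => map_mul_div_of_tendstoLocallyUniformlyOn htb (fun t => (hfpos t).ne')
      hα hlim (hgc.comp (continuousOn_id.sub continuousOn_const) hmaps) hLconv hs₁ hs₂)
    (by simpa [L] using hg0) hLmono
  refine ⟨p, hp, fun t ht => ?_, hLconv.congr_right fun s hs => hLeq s hs⟩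
  simpa [L] using hLeq (t + tb) (by linarith)

/-- Lemma A.1(4): if `f > 0` is non-decreasing with `f(t) → 0` as `t → -∞`,
`β/α(β) → t̄ ∈ (-∞, 0)` as `β → -∞`, and `f(α(β)t + β)/f(β) → g(t)` locally uniformly in
`t < -t̄`, then `g(t) = (t̄/(t + t̄))^p` for some `p ≥ 0` and `f(α(β)s)/f(β) → (t̄/s)^p`
locally uniformly in `s < 0`. -/
theorem stmt_16 (f : ℝ → ℝ) (hf : Monotone f) (hfpos : ∀ t, 0 < f t)
    (hf0 : Tendsto f atBot (𝓝 0))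
    (α : ℝ → ℝ) (hαc : ContinuousOn α (Iio 0)) (hαpos : ∀ β < (0:ℝ), 0 < α β)
    (tb : ℝ) (htb : tb < 0)
    (hlim : Tendsto (fun β => β / α β) atBot (𝓝 tb))
    (g : ℝ → ℝ) (hgc : ContinuousOn g (Iio (-tb)))
    (hconv : TendstoLocallyUniformlyOn (fun β t => f (α β * t + β) / f β) g
      atBot (Iio (-tb))) :
    ∃ p ≥ (0:ℝ), (∀ t, t < -tb → g t = (tb/(t + tb)) ^ p) ∧
      TendstoLocallyUniformlyOn (fun β s => f (α β * s) / f β)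
        (fun s => (tb / s) ^ p) atBot (Iio 0) :=
  stmt_16_general f hf hfpos α tb htb hlim g hgc hconv
end

section
/- Let B₁ be the open unit ball of ℝ², let λ < 0 and set δ := 1 + (4 + 2√(4 − 2λ))/(−λ). Then the function u(x) := log( 8δ / (−λ (δ − |x|²)²) ) is twice continuously differentiable on a neighborhood of the closed unit ball, satisfies −Δu(x) = λ e^{u(x)} and u(x) < 0 for every x ∈ B₁, and u(x) = 0 for every x with |x| = 1. Moreover, u(x) + log(−λ) → log( 8/(1 − |x|²)² ) as λ → −∞, uniformly on every compact subset of B₁. -/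
open Set MeasureTheory Filter Topology

/-!
Near the closed disc, `u_λ = log (8δ/(-λ)) - 2 log (δ - |x|²)` is a Liouville bubble: in the plane
its Laplacian is `8δ/(δ - |x|²)² = -λ e^{u_λ}`. The constant `δ` is the root `δ > 1` of
`-λ (δ - 1)² = 8δ`, which is exactly the condition `u_λ = 0` on the unit circle; it then gives
`e^{u_λ} = ((δ - 1)/(δ - |x|²))² < 1` inside the disc. Finally
`u_λ + log (-λ) = log (8δ/(δ - |x|²)²)` is jointly continuous in `(δ, x)` and `δ → 1` as
`λ → -∞`, so uniform continuity on `[a, 2] × K` gives the uniform convergence on compact `K`.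
-/

open scoped Laplacian RealInnerProductSpace

section LogSubNormSq

variable {E : Type*} [NormedAddCommGroup E] [InnerProductSpace ℝ E] {d : ℝ} {x : E}

theorem hasFDerivAt_sub_norm_sq (d : ℝ) (x : E) :
    HasFDerivAt (fun y : E => d - ‖y‖ ^ 2) (-(2 • innerSL ℝ x)) x :=
  (hasStrictFDerivAt_norm_sq x).hasFDerivAt.const_sub d

theorem hasFDerivAt_log_sub_norm_sq (hx : ‖x‖ ^ 2 < d) :
    HasFDerivAt (fun y : E => Real.log (d - ‖y‖ ^ 2)) ((-2 / (d - ‖x‖ ^ 2)) • innerSL ℝ x) x := by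
  refine ((hasFDerivAt_sub_norm_sq d x).log (by linarith)).congr_fderiv ?_
  ext v
  simp
  ring

theorem contDiffAt_log_sub_norm_sq {n : WithTop ℕ∞} (hx : ‖x‖ ^ 2 < d) :
    ContDiffAt ℝ n (fun y : E => Real.log (d - ‖y‖ ^ 2)) x :=
  (contDiffAt_const.sub (contDiff_norm_sq ℝ).contDiffAt).log (by linarith)

theorem iteratedFDeriv_two_log_sub_norm_sq_apply (hx : ‖x‖ ^ 2 < d) (v : E) :
    iteratedFDeriv ℝ 2 (fun y : E => Real.log (d - ‖y‖ ^ 2)) x ![v, v] =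
      -(2 * ‖v‖ ^ 2 / (d - ‖x‖ ^ 2) + 4 * ⟪x, v⟫ ^ 2 / (d - ‖x‖ ^ 2) ^ 2) := by
  have hfderiv : fderiv ℝ (fun y : E => Real.log (d - ‖y‖ ^ 2)) =ᶠ[𝓝 x]
      fun y => (-2 / (d - ‖y‖ ^ 2)) • innerSL ℝ y := by
    filter_upwards [(continuous_norm.pow 2).continuousAt.eventually_lt continuousAt_const hx]
      with y hy using (hasFDerivAt_log_sub_norm_sq hy).fderiv
  have hcoeff : HasFDerivAt (fun y : E => -2 / (d - ‖y‖ ^ 2)) _ x :=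
    ((hasDerivAt_inv (by linarith)).const_mul (-2)).comp_hasFDerivAt x (hasFDerivAt_sub_norm_sq d x)
  -- over `ℝ` the conjugate-linear `innerSL ℝ` is linear, so it is its own derivative
  have hgrad : HasFDerivAt (fun y : E => (-2 / (d - ‖y‖ ^ 2)) • innerSL ℝ y) _ x :=
    hcoeff.smul (innerSL ℝ : E →L[ℝ] E →L[ℝ] ℝ).hasFDerivAt
  have hvv : (innerSL ℝ : E →L[ℝ] E →L[ℝ] ℝ) v v = ‖v‖ ^ 2 := real_inner_self_eq_norm_sq v
  rw [iteratedFDeriv_two_apply, hfderiv.fderiv_eq, hgrad.fderiv]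
  simp [hvv]
  field_simp
  ring

theorem laplacian_log_sub_norm_sq [FiniteDimensional ℝ E] (hx : ‖x‖ ^ 2 < d) :
    Δ (fun y : E => Real.log (d - ‖y‖ ^ 2)) x =
      -(2 * Module.finrank ℝ E / (d - ‖x‖ ^ 2) + 4 * ‖x‖ ^ 2 / (d - ‖x‖ ^ 2) ^ 2) := by
  rw [InnerProductSpace.laplacian_eq_iteratedFDeriv_stdOrthonormalBasis]
  simp only [iteratedFDeriv_two_log_sub_norm_sq_apply hx, OrthonormalBasis.norm_eq_one,
    Finset.sum_neg_distrib, Finset.sum_add_distrib, ← Finset.sum_div, ← Finset.mul_sum,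
    OrthonormalBasis.sum_sq_inner_left]
  simp

end LogSubNormSq

section LiouvilleBubble

variable {E : Type*} [NormedAddCommGroup E] {d μ : ℝ}

noncomputable def liouvilleBubble (μ d : ℝ) (y : E) : ℝ :=
  Real.log (8 * d / (μ * (d - ‖y‖ ^ 2) ^ 2))

theorem liouvilleBubble_eq_sub_log (hμ : μ ≠ 0) (hd : d ≠ 0) {y : E} (hy : ‖y‖ ^ 2 < d) :
    liouvilleBubble μ d y = Real.log (8 * d / μ) - 2 * Real.log (d - ‖y‖ ^ 2) := by
  have hD : d - ‖y‖ ^ 2 ≠ 0 := by linarith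
  rw [liouvilleBubble, ← div_div, Real.log_div (by positivity) (by positivity), Real.log_pow]
  push_cast
  ring

theorem liouvilleBubble_add_log (hμ : μ ≠ 0) (hd : d ≠ 0) {y : E} (hy : ‖y‖ ^ 2 < d) :
    liouvilleBubble μ d y + Real.log μ = liouvilleBubble 1 d y := by
  have hD : d - ‖y‖ ^ 2 ≠ 0 := by linarith
  rw [liouvilleBubble, liouvilleBubble, ← Real.log_mul (by positivity) hμ]
  congr 1
  field_simp

theorem liouvilleBubble_eq_zero_of_norm_eq_one (h : 8 * d = μ * (d - 1) ^ 2) (hd : d ≠ 0) {y : E}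
    (hy : ‖y‖ = 1) : liouvilleBubble μ d y = 0 := by
  rw [liouvilleBubble, hy, one_pow, ← h, div_self (mul_ne_zero (by norm_num) hd), Real.log_one]

theorem liouvilleBubble_neg_of_norm_lt_one (h : 8 * d = μ * (d - 1) ^ 2) (hd : 1 < d) {y : E}
    (hy : ‖y‖ < 1) : liouvilleBubble μ d y < 0 := by
  have hμ : 0 < μ := by
    by_contra! hμ
    nlinarith [mul_nonpos_of_nonpos_of_nonneg hμ (sq_nonneg (d - 1))]
  have hy2 : ‖y‖ ^ 2 < 1 := by nlinarith [norm_nonneg y]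
  have hsq : (d - 1) ^ 2 < (d - ‖y‖ ^ 2) ^ 2 := by nlinarith
  have hd1 : 0 < d - 1 := by linarith
  rw [liouvilleBubble, h]
  apply Real.log_neg (div_pos (by positivity) (mul_pos hμ (by nlinarith)))
  rw [div_lt_one (by nlinarith)]
  exact mul_lt_mul_of_pos_left hsq hμ

theorem tendstoUniformlyOn_liouvilleBubble (hμ : μ ≠ 0) {K : Set E} (hK : IsCompact K)
    (hK1 : K ⊆ Metric.ball 0 1) :
    TendstoUniformlyOn (fun d => liouvilleBubble μ d) (liouvilleBubble μ 1) (𝓝 1) K := by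
  rcases K.eq_empty_or_nonempty with rfl | hne
  · exact tendstoUniformlyOn_empty
  obtain ⟨x₀, hx₀, hmax⟩ := hK.exists_isMaxOn hne continuous_norm.continuousOn
  have hx₀1 : ‖x₀‖ ^ 2 < 1 := by
    have := mem_ball_zero_iff.1 (hK1 hx₀)
    nlinarith [norm_nonneg x₀]
  obtain ⟨a, hx₀a, ha1⟩ := exists_between hx₀1
  have hmem : ∀ p ∈ Icc a 2 ×ˢ K, ‖p.2‖ ^ 2 < p.1 ∧ 0 < p.1 := by
    rintro ⟨d, y⟩ ⟨⟨had, -⟩, hy⟩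
    have : ‖y‖ ^ 2 ≤ ‖x₀‖ ^ 2 := pow_le_pow_left₀ (norm_nonneg y) (hmax hy) 2
    constructor <;> dsimp only <;> nlinarith [norm_nonneg y]
  have hcont : ContinuousOn ↿(fun d => (liouvilleBubble μ d : E → ℝ)) (Icc a 2 ×ˢ K) := by
    refine ContinuousOn.log (ContinuousOn.div (by fun_prop) (by fun_prop) fun p hp => ?_)
      fun p hp => ?_
    all_goals
      obtain ⟨h1, h2⟩ := hmem p hp
      have : p.1 - ‖p.2‖ ^ 2 ≠ 0 := by linarith
      positivity
  have h := (isCompact_Icc.prod hK).uniformContinuousOn_of_continuous hcont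
    |>.tendstoUniformlyOn (show (1 : ℝ) ∈ Icc a 2 by constructor <;> linarith)
  rwa [nhdsWithin_eq_nhds.2 (Icc_mem_nhds ha1 (by norm_num))] at h

variable [InnerProductSpace ℝ E] {x : E}

theorem contDiffOn_liouvilleBubble (hμ : μ ≠ 0) (hd : d ≠ 0) {n : WithTop ℕ∞} :
    ContDiffOn ℝ n (liouvilleBubble μ d : E → ℝ) {y | ‖y‖ ^ 2 < d} := by
  intro y hy
  have hD : d - ‖y‖ ^ 2 ≠ 0 := by linarith [show ‖y‖ ^ 2 < d from hy]
  refine ContDiffAt.contDiffWithinAt (ContDiffAt.log ?_ (by positivity))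
  exact contDiffAt_const.div
    (contDiffAt_const.mul ((contDiffAt_const.sub (contDiff_norm_sq ℝ).contDiffAt).pow 2))
    (by positivity)

theorem laplacian_liouvilleBubble [FiniteDimensional ℝ E] (hμ : μ ≠ 0) (hd : d ≠ 0)
    (hx : ‖x‖ ^ 2 < d) :
    Δ (liouvilleBubble μ d : E → ℝ) x =
      4 * Module.finrank ℝ E / (d - ‖x‖ ^ 2) + 8 * ‖x‖ ^ 2 / (d - ‖x‖ ^ 2) ^ 2 := by
  set L : E → ℝ := fun y => Real.log (d - ‖y‖ ^ 2)
  have hL : ContDiffAt ℝ 2 L x := contDiffAt_log_sub_norm_sq hx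
  have h2L : ContDiffAt ℝ 2 ((2 : ℝ) • L) x := hL.const_smul (2 : ℝ)
  have hloc : liouvilleBubble μ d =ᶠ[𝓝 x] (fun _ => Real.log (8 * d / μ)) - (2 : ℝ) • L := by
    filter_upwards [(continuous_norm.pow 2).continuousAt.eventually_lt continuousAt_const hx]
      with y hy using liouvilleBubble_eq_sub_log hμ hd hy
  rw [(InnerProductSpace.laplacian_congr_nhds hloc).self_of_nhds,
    contDiffAt_const.laplacian_sub h2L, InnerProductSpace.laplacian_smul _ hL,
    laplacian_log_sub_norm_sq hx]
  simp
  ring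

theorem laplacian_liouvilleBubble_eq_mul_exp [FiniteDimensional ℝ E]
    (hE : Module.finrank ℝ E = 2) (hμ : 0 < μ) (hd : 0 < d) (hx : ‖x‖ ^ 2 < d) :
    Δ (liouvilleBubble μ d : E → ℝ) x = μ * Real.exp (liouvilleBubble μ d x) := by
  have hD : 0 < d - ‖x‖ ^ 2 := by linarith
  rw [laplacian_liouvilleBubble hμ.ne' hd.ne' hx, liouvilleBubble, Real.exp_log (by positivity),
    hE]
  field_simp
  ring

end LiouvilleBubble

theorem laplacian_eq_Laplacian_laplacian {N : ℕ} (u : EuclideanSpace ℝ (Fin N) → ℝ)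
    (x : EuclideanSpace ℝ (Fin N)) : laplacian u x = Δ u x := by
  simp [laplacian, InnerProductSpace.laplacian_eq_iteratedFDeriv_orthonormalBasis u
    (EuclideanSpace.basisFun (Fin N) ℝ)]

section LiouvilleDelta

variable {lam : ℝ}

noncomputable def liouvilleDelta (lam : ℝ) : ℝ :=
  1 + (4 + 2 * Real.sqrt (4 - 2 * lam)) / (-lam)

theorem one_lt_liouvilleDelta (h : lam < 0) : 1 < liouvilleDelta lam := by
  have : 0 < (4 + 2 * Real.sqrt (4 - 2 * lam)) / (-lam) :=
    div_pos (by linarith [Real.sqrt_nonneg (4 - 2 * lam)]) (by linarith)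
  unfold liouvilleDelta
  linarith

theorem eight_mul_liouvilleDelta (h : lam < 0) :
    8 * liouvilleDelta lam = -lam * (liouvilleDelta lam - 1) ^ 2 := by
  have hs := Real.sq_sqrt (show 0 ≤ 4 - 2 * lam by linarith)
  have hl : lam ≠ 0 := h.ne
  unfold liouvilleDelta
  field_simp
  linear_combination 4 * hs

theorem liouvilleDelta_eq_of_neg (h : lam < 0) :
    liouvilleDelta lam = 1 + 4 * (-lam)⁻¹ + 2 * Real.sqrt (4 * (-lam)⁻¹ ^ 2 + 2 * (-lam)⁻¹) := by
  have hl : 0 < -lam := by linarith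
  have hrad : 4 * (-lam)⁻¹ ^ 2 + 2 * (-lam)⁻¹ = (4 - 2 * lam) * (-lam)⁻¹ ^ 2 := by
    field_simp
    ring
  rw [liouvilleDelta, hrad, Real.sqrt_mul (by linarith), Real.sqrt_sq (inv_nonneg.2 hl.le)]
  field_simp
  ring

theorem tendsto_liouvilleDelta_atBot : Tendsto liouvilleDelta atBot (𝓝 1) := by
  have hφ : Continuous fun s : ℝ => 1 + 4 * s + 2 * Real.sqrt (4 * s ^ 2 + 2 * s) := by fun_prop
  have h := (hφ.tendsto 0).comp tendsto_neg_atBot_atTop.inv_tendsto_atTop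
  refine Tendsto.congr' ?_ (by simpa using h)
  filter_upwards [eventually_lt_atBot 0] with lam hlam
  exact (liouvilleDelta_eq_of_neg hlam).symm

theorem tendstoUniformlyOn_liouvilleBubble_add_log {E : Type*} [NormedAddCommGroup E]
    {K : Set E} (hK : IsCompact K) (hK1 : K ⊆ Metric.ball 0 1) :
    TendstoUniformlyOn
      (fun lam x => liouvilleBubble (-lam) (liouvilleDelta lam) x + Real.log (-lam))
      (liouvilleBubble 1 1) atBot K := by
  have hcomp : TendstoUniformlyOn (fun lam => liouvilleBubble 1 (liouvilleDelta lam))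
      (liouvilleBubble 1 1) atBot K := fun s hs =>
    tendsto_liouvilleDelta_atBot.eventually
      (tendstoUniformlyOn_liouvilleBubble one_ne_zero hK hK1 s hs)
  refine hcomp.congr ?_
  filter_upwards [eventually_lt_atBot 0] with lam hlam x hx
  have hd := one_lt_liouvilleDelta hlam
  have hx2 : ‖x‖ ^ 2 < liouvilleDelta lam :=
    (pow_le_one₀ (norm_nonneg x) (mem_ball_zero_iff.1 (hK1 hx)).le).trans_lt hd
  exact (liouvilleBubble_add_log (neg_pos.2 hlam).ne' (by linarith) hx2).symm

end LiouvilleDelta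

/-- Example 4.1(i): the explicit solutions of `-Δu = λ e^u` in the unit disk, and their
convergence `u_λ + log(-λ) → log(8/(1-|x|²)²)` locally uniformly as `λ → -∞`. -/
theorem stmt_17 (δ : ℝ → ℝ)
    (hδ : ∀ lam, δ lam = 1 + (4 + 2 * Real.sqrt (4 - 2 * lam)) / (-lam))
    (u : ℝ → EuclideanSpace ℝ (Fin 2) → ℝ)
    (hu : ∀ lam x, u lam x = Real.log (8 * δ lam / (-lam * (δ lam - ‖x‖^2)^2))) :
    (∀ lam < (0:ℝ),
      (∃ U, IsOpen U ∧ Metric.closedBall (0 : EuclideanSpace ℝ (Fin 2)) 1 ⊆ U ∧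
        ContDiffOn ℝ 2 (u lam) U) ∧
      (∀ x ∈ Metric.ball (0 : EuclideanSpace ℝ (Fin 2)) 1,
        -laplacian (u lam) x = lam * Real.exp (u lam x) ∧ u lam x < 0) ∧
      (∀ x : EuclideanSpace ℝ (Fin 2), ‖x‖ = 1 → u lam x = 0)) ∧
    (∀ K ⊆ Metric.ball (0 : EuclideanSpace ℝ (Fin 2)) 1, IsCompact K →
      TendstoUniformlyOn (fun lam x => u lam x + Real.log (-lam))
        (fun x => Real.log (8 / (1 - ‖x‖^2)^2)) atBot K) := by
  have hu' : ∀ lam, u lam = liouvilleBubble (-lam) (δ lam) := fun lam => funext (hu lam)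
  obtain rfl : δ = liouvilleDelta := funext hδ
  simp only [hu']
  refine ⟨fun lam hlam => ?_, fun K hK1 hK => ?_⟩
  · have hμ : 0 < -lam := neg_pos.2 hlam
    have hd := one_lt_liouvilleDelta hlam
    have h8 := eight_mul_liouvilleDelta hlam
    have hdisc : ∀ x : EuclideanSpace ℝ (Fin 2), ‖x‖ ≤ 1 → ‖x‖ ^ 2 < liouvilleDelta lam :=
      fun x hx => (pow_le_one₀ (norm_nonneg x) hx).trans_lt hd
    refine ⟨⟨{y | ‖y‖ ^ 2 < liouvilleDelta lam}, isOpen_lt (by fun_prop) continuous_const,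
        fun x hx => hdisc x (mem_closedBall_zero_iff.1 hx),
        contDiffOn_liouvilleBubble hμ.ne' (by linarith)⟩,
      fun x hx => ⟨?_, liouvilleBubble_neg_of_norm_lt_one h8 hd (mem_ball_zero_iff.1 hx)⟩,
      fun x hx => liouvilleBubble_eq_zero_of_norm_eq_one h8 (by linarith) hx⟩
    rw [laplacian_eq_Laplacian_laplacian, laplacian_liouvilleBubble_eq_mul_exp
      finrank_euclideanSpace_fin hμ (by linarith) (hdisc x (mem_ball_zero_iff.1 hx).le),
      neg_mul, neg_neg]
  · exact (tendstoUniformlyOn_liouvilleBubble_add_log hK hK1).congr_right fun x _ => by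
      simp [liouvilleBubble]
end

section
/- Let λ < 0 and define u : [−1, 1] → ℝ by u(x) := 1 − √( 1 + (−2λ/(1 + √(1 − 4λ))) (1 − x²) ). Then u is twice continuously differentiable on (−1, 1), satisfies −u″(x) = λ/(1 − u(x))³ and u(x) < 0 for every x ∈ (−1, 1), and u(−1) = u(1) = 0. -/
open Set Filter Topology

/-! The profile `√(a - b x²)` solves `v'' = -a b / v³`, so `u = 1 - v` solves `-u'' = λ / (1 - u)³`
as soon as `a b = -λ`. With `c = -2λ / (1 + √(1 - 4λ))`, the positive root of `c² + c + λ = 0`,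
the given `u` is `1 - √((1 + c) - c x²)`, and `(1 + c) c = -λ`. -/

lemma neg_two_mul_div_one_add_sqrt_pos {lam : ℝ} (hlam : lam < 0) :
    0 < -2 * lam / (1 + √(1 - 4 * lam)) := by
  have := Real.sqrt_nonneg (1 - 4 * lam)
  exact div_pos (by linarith) (by linarith)

lemma neg_two_mul_div_one_add_sqrt_mul_one_add {lam : ℝ} (hlam : lam ≤ 1 / 4) :
    let c := -2 * lam / (1 + √(1 - 4 * lam))
    (1 + c) * c = -lam := by
  intro c
  have hs := Real.sqrt_nonneg (1 - 4 * lam)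
  have hs2 : √(1 - 4 * lam) ^ 2 = 1 - 4 * lam := Real.sq_sqrt (by linarith)
  have hc : c = (√(1 - 4 * lam) - 1) / 2 := by
    rw [div_eq_div_iff (by linarith) two_ne_zero]
    linear_combination -hs2
  rw [hc]
  linear_combination hs2 / 4

section SqrtProfile

variable {a b x : ℝ}

lemma hasDerivAt_sqrt_sub_mul_sq (h : 0 < a - b * x ^ 2) :
    HasDerivAt (fun y => √(a - b * y ^ 2)) (-(b * x) / √(a - b * x ^ 2)) x := by
  have hg : HasDerivAt (fun y => a - b * y ^ 2) (-(b * (2 * x))) x := by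
    simpa using ((hasDerivAt_pow 2 x).const_mul b).const_sub a
  convert hg.sqrt h.ne' using 1
  field_simp

lemma hasDerivAt_deriv_sqrt_sub_mul_sq (h : 0 < a - b * x ^ 2) :
    HasDerivAt (deriv fun y => √(a - b * y ^ 2)) (-(a * b) / √(a - b * x ^ 2) ^ 3) x := by
  have hv := Real.sqrt_pos.mpr h
  have hv2 : √(a - b * x ^ 2) ^ 2 = a - b * x ^ 2 := Real.sq_sqrt h.le
  have hderiv : deriv (fun y => √(a - b * y ^ 2)) =ᶠ[𝓝 x]
      fun y => -(b * y) / √(a - b * y ^ 2) := by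
    have hopen : IsOpen {y : ℝ | 0 < a - b * y ^ 2} := isOpen_lt continuous_const (by fun_prop)
    filter_upwards [hopen.mem_nhds h] with y hy
    exact (hasDerivAt_sqrt_sub_mul_sq hy).deriv
  refine HasDerivAt.congr_of_eventuallyEq ?_ hderiv
  have hnum : HasDerivAt (fun y => -(b * y)) (-b) x := by
    simpa using (hasDerivAt_id x).const_mul (-b)
  refine (hnum.fun_div (hasDerivAt_sqrt_sub_mul_sq h) hv.ne').congr_deriv ?_
  field_simp
  linear_combination -b * hv2

lemma contDiffAt_sqrt_sub_mul_sq {n : WithTop ℕ∞} (h : a - b * x ^ 2 ≠ 0) :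
    ContDiffAt ℝ n (fun y => √(a - b * y ^ 2)) x :=
  ContDiffAt.sqrt (by fun_prop) h

end SqrtProfile

/-- Example 4.1(ii): the explicit solution of `-u'' = λ/(1-u)³` on `(-1, 1)` with
`u < 0` inside and `u(±1) = 0`. -/
theorem stmt_19 (lam : ℝ) (hlam : lam < 0) (u : ℝ → ℝ)
    (hu : ∀ x, u x = 1 - Real.sqrt (1 + (-2*lam/(1 + Real.sqrt (1 - 4*lam))) * (1 - x^2))) :
    ContDiffOn ℝ 2 u (Ioo (-1) 1) ∧
    (∀ x ∈ Ioo (-1:ℝ) 1, -deriv (deriv u) x = lam / (1 - u x)^3 ∧ u x < 0) ∧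
    u (-1) = 0 ∧ u 1 = 0 := by
  set c := -2 * lam / (1 + √(1 - 4 * lam))
  have hc : 0 < c := neg_two_mul_div_one_add_sqrt_pos hlam
  have hlamc : (1 + c) * c = -lam := neg_two_mul_div_one_add_sqrt_mul_one_add (by linarith)
  have hu' : u = fun x => 1 - √((1 + c) - c * x ^ 2) := by
    funext x; rw [hu x]; ring_nf
  have hgt : ∀ x ∈ Ioo (-1 : ℝ) 1, 1 < (1 + c) - c * x ^ 2 := fun x ⟨h₁, h₂⟩ => by
    have : x ^ 2 < 1 := by nlinarith
    nlinarith
  subst hu'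
  refine ⟨fun x hx => ?_, fun x hx => ⟨?_, ?_⟩, by simp, by simp⟩
  · have hne : (1 + c) - c * x ^ 2 ≠ 0 := by linarith [hgt x hx]
    exact (contDiffAt_const.sub (contDiffAt_sqrt_sub_mul_sq hne)).contDiffWithinAt
  · have hpos : 0 < (1 + c) - c * x ^ 2 := by linarith [hgt x hx]
    have h := hasDerivAt_deriv_sqrt_sub_mul_sq hpos
    have hd : deriv (fun y => 1 - √((1 + c) - c * y ^ 2)) =
        fun y => -deriv (fun y => √((1 + c) - c * y ^ 2)) y :=
      funext fun y => deriv_const_sub 1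
    rw [hd, deriv.fun_neg, neg_neg, h.deriv, sub_sub_cancel, hlamc]
    ring
  · have := (Real.lt_sqrt zero_le_one).mpr (by linarith [hgt x hx] : 1 ^ 2 < (1 + c) - c * x ^ 2)
    linarith
end
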